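/- arXiv:2108.02879 — 7 statements merged into one kernel-verified Lean document; each statement's English description precedes it below -/
import Mathlib

section
/- Given measures R and probability couplings on Polish spaces, if P* minimizes H(P | R) subject to the endpoint marginal constraints P₀ = ρ₀ and P₁ = ρ₁, then its endpoint joint law P*₀₁ minimizes H(π | R₀₁) over couplings π with marginals π₀ = ρ₀ and π₁ = ρ₁. Conversely, if π* minimizes the static problem, then the mixture P* = ∫ R^{xy} dπ*(x,y) minimizes the dynamic problem, and P*₀₁ = π*. -/
/-!
Both directions are sandwiches between two instances of the data-processing inequality. Pushing
forward along the endpoint map gives `H(P₀₁ | R₀₁) ≤ H(P | R)`. Since `R` is the mixture of its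
bridges over `R₀₁`, applying the Markov kernel `xy ↦ R^{xy}` to `π` and to `R₀₁` gives
`H(∫ R^{xy} dπ | R) ≤ H(π | R₀₁)`, and the concentration of each bridge on its endpoints makes the
endpoint law of `∫ R^{xy} dπ` equal to `π`. So couplings and path measures with the prescribed
marginals can be traded for each other without increasing entropy.
-/

open MeasureTheory Classical

/-- Relative entropy `H(P | Q)`. -/
noncomputable def relEnt {Ω : Type*} [MeasurableSpace Ω] (P Q : Measure Ω) : EReal :=
  if P ≪ Q ∧ Integrable (llr P Q) P then ((∫ ω, llr P Q ω ∂P : ℝ) : EReal) else ⊤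

open ProbabilityTheory InformationTheory

section

variable {α β : Type*} [MeasurableSpace α] [MeasurableSpace β]

-- `klDiv` adds the mass correction `ν univ - μ univ`, which vanishes here.
lemma relEnt_eq_klDiv {μ ν : Measure α} [IsFiniteMeasure μ] [IsFiniteMeasure ν]
    (h : μ Set.univ = ν Set.univ) : relEnt μ ν = klDiv μ ν := by
  by_cases hμν : μ ≪ ν ∧ Integrable (llr μ ν) μ
  · have hgibbs := integral_llr_add_sub_measure_univ_nonneg hμν.1 hμν.2
    rw [Measure.real, Measure.real, h, add_sub_cancel_right] at hgibbs
    rw [relEnt, if_pos hμν, klDiv_of_ac_of_integrable hμν.1 hμν.2, Measure.real, Measure.real, h,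
      add_sub_cancel_right, EReal.coe_ennreal_ofReal, max_eq_left hgibbs]
  · rw [relEnt, if_neg hμν, klDiv_eq_top_iff.mpr (fun hac hint => hμν ⟨hac, hint⟩),
      EReal.coe_ennreal_top]

lemma relEnt_map_le (μ ν : Measure α) [IsProbabilityMeasure μ] [IsProbabilityMeasure ν]
    {f : α → β} (hf : Measurable f) : relEnt (μ.map f) (ν.map f) ≤ relEnt μ ν := by
  have := Measure.isProbabilityMeasure_map (μ := μ) hf.aemeasurable
  have := Measure.isProbabilityMeasure_map (μ := ν) hf.aemeasurable
  rw [relEnt_eq_klDiv (by simp), relEnt_eq_klDiv (by simp), EReal.coe_ennreal_le_coe_ennreal_iff]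
  exact klDiv_map_le μ ν hf

lemma relEnt_comp_le (μ ν : Measure α) [IsProbabilityMeasure μ] [IsProbabilityMeasure ν]
    (κ : Kernel α β) [IsMarkovKernel κ] : relEnt (κ ∘ₘ μ) (κ ∘ₘ ν) ≤ relEnt μ ν := by
  rw [relEnt_eq_klDiv (by simp), relEnt_eq_klDiv (by simp), EReal.coe_ennreal_le_coe_ennreal_iff]
  exact klDiv_comp_right_le μ ν κ

lemma ProbabilityTheory.Kernel.map_eq_id_of_ae_eq {κ : Kernel β α} [IsMarkovKernel κ]
    {f : α → β} (hf : Measurable f) (h : ∀ y, ∀ᵐ x ∂κ y, f x = y) : κ.map f = Kernel.id := by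
  ext1 y
  rw [Kernel.map_apply _ hf, Kernel.id_apply, Measure.map_congr (h y), Measure.map_const,
    measure_univ, one_smul]

lemma ProbabilityTheory.Kernel.map_comp_eq_self_of_ae_eq {κ : Kernel β α} [IsMarkovKernel κ]
    {f : α → β} (hf : Measurable f) (h : ∀ y, ∀ᵐ x ∂κ y, f x = y) (μ : Measure β) :
    (κ ∘ₘ μ).map f = μ := by
  rw [Measure.map_comp μ κ hf, κ.map_eq_id_of_ae_eq hf h, Measure.id_comp]

end

theorem schroedinger_static_dynamic_equivalence_general
    {Ω 𝒳 : Type*} [MeasurableSpace Ω]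
    [MeasurableSpace 𝒳]
    (X₀ X₁ : Ω → 𝒳) (hX₀ : Measurable X₀) (hX₁ : Measurable X₁)
    (R : Measure Ω) [IsProbabilityMeasure R]
    (ρ₀ ρ₁ : Measure 𝒳)
    -- bridges `R^{xy}` : a disintegration of `R` over the endpoint pair
    (Rxy : 𝒳 × 𝒳 → Measure Ω) (hRm : Measurable Rxy)
    (hRprob : ∀ xy, IsProbabilityMeasure (Rxy xy))
    (hRfib : ∀ xy, Rxy xy {ω | (X₀ ω, X₁ ω) ≠ xy} = 0)
    (hRdis : R = (R.map (fun ω => (X₀ ω, X₁ ω))).bind Rxy) :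
    -- dynamic minimizer ⟹ static minimizer
    ((∀ Pstar : Measure Ω, IsProbabilityMeasure Pstar →
        Pstar.map X₀ = ρ₀ → Pstar.map X₁ = ρ₁ →
        (∀ P : Measure Ω, IsProbabilityMeasure P →
          P.map X₀ = ρ₀ → P.map X₁ = ρ₁ →
          relEnt Pstar R ≤ relEnt P R) →
        ((Pstar.map (fun ω => (X₀ ω, X₁ ω))).fst = ρ₀ ∧
         (Pstar.map (fun ω => (X₀ ω, X₁ ω))).snd = ρ₁ ∧
         (∀ π : Measure (𝒳 × 𝒳), IsProbabilityMeasure π →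
            π.fst = ρ₀ → π.snd = ρ₁ →
            relEnt (Pstar.map (fun ω => (X₀ ω, X₁ ω)))
                (R.map (fun ω => (X₀ ω, X₁ ω)))
              ≤ relEnt π (R.map (fun ω => (X₀ ω, X₁ ω)))))) ∧
    -- static minimizer ⟹ dynamic minimizer via `Pstar = pistar.bind Rxy`
    (∀ pistar : Measure (𝒳 × 𝒳), IsProbabilityMeasure pistar →
        pistar.fst = ρ₀ → pistar.snd = ρ₁ →
        (∀ π : Measure (𝒳 × 𝒳), IsProbabilityMeasure π →
          π.fst = ρ₀ → π.snd = ρ₁ →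
          relEnt pistar (R.map (fun ω => (X₀ ω, X₁ ω)))
            ≤ relEnt π (R.map (fun ω => (X₀ ω, X₁ ω)))) →
        (IsProbabilityMeasure (pistar.bind Rxy) ∧
         (pistar.bind Rxy).map X₀ = ρ₀ ∧ (pistar.bind Rxy).map X₁ = ρ₁ ∧
         (∀ P : Measure Ω, IsProbabilityMeasure P →
            P.map X₀ = ρ₀ → P.map X₁ = ρ₁ →
            relEnt (pistar.bind Rxy) R ≤ relEnt P R) ∧
         (pistar.bind Rxy).map (fun ω => (X₀ ω, X₁ ω)) = pistar))) := by
  set T : Ω → 𝒳 × 𝒳 := fun ω => (X₀ ω, X₁ ω)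
  have hT : Measurable T := hX₀.prodMk hX₁
  have hfst (μ : Measure Ω) : (μ.map T).fst = μ.map X₀ := Measure.fst_map_prodMk hX₁
  have hsnd (μ : Measure Ω) : (μ.map T).snd = μ.map X₁ := Measure.snd_map_prodMk hX₀
  let κ : Kernel (𝒳 × 𝒳) Ω := ⟨Rxy, hRm⟩
  have : IsMarkovKernel κ := ⟨hRprob⟩
  have hκ_prob (π : Measure (𝒳 × 𝒳)) [IsProbabilityMeasure π] :
      IsProbabilityMeasure (π.bind Rxy) :=
    inferInstanceAs (IsProbabilityMeasure (κ ∘ₘ π))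
  have hκ_map (π : Measure (𝒳 × 𝒳)) : (π.bind Rxy).map T = π :=
    κ.map_comp_eq_self_of_ae_eq hT (fun xy => ae_iff.mpr (hRfib xy)) π
  have hκ_le (π : Measure (𝒳 × 𝒳)) [IsProbabilityMeasure π] :
      relEnt (π.bind Rxy) R ≤ relEnt π (R.map T) := by
    have : IsProbabilityMeasure (R.map T) := Measure.isProbabilityMeasure_map hT.aemeasurable
    conv_lhs => rw [hRdis]
    exact relEnt_comp_le π (R.map T) κ
  have hT_le (P : Measure Ω) [IsProbabilityMeasure P] : relEnt (P.map T) (R.map T) ≤ relEnt P R :=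
    relEnt_map_le P R hT
  refine ⟨fun Pstar _ hP₀ hP₁ hmin => ⟨by rw [hfst, hP₀], by rw [hsnd, hP₁], ?_⟩,
    fun pistar _ hπ₀ hπ₁ hmin => ?_⟩
  · intro π _ hπ₀ hπ₁
    calc relEnt (Pstar.map T) (R.map T) ≤ relEnt Pstar R := hT_le Pstar
      _ ≤ relEnt (π.bind Rxy) R :=
        hmin _ (hκ_prob π) (by rw [← hfst, hκ_map, hπ₀]) (by rw [← hsnd, hκ_map, hπ₁])
      _ ≤ relEnt π (R.map T) := hκ_le π
  · refine ⟨hκ_prob pistar, by rw [← hfst, hκ_map, hπ₀], by rw [← hsnd, hκ_map, hπ₁],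
      fun P _ hP₀ hP₁ => ?_, hκ_map pistar⟩
    have : IsProbabilityMeasure (P.map T) := Measure.isProbabilityMeasure_map hT.aemeasurable
    calc relEnt (pistar.bind Rxy) R ≤ relEnt pistar (R.map T) := hκ_le pistar
      _ ≤ relEnt (P.map T) (R.map T) :=
        hmin _ inferInstance (by rw [hfst, hP₀]) (by rw [hsnd, hP₁])
      _ ≤ relEnt P R := hT_le P

/-- equivalence of the dynamic and static Schrödinger bridge
problems. If `Pstar` minimizes `H(P | R)` subject to `P₀ = ρ₀`, `P₁ = ρ₁`, then
its endpoint joint law minimizes `H(π | R₀₁)` over couplings of `(ρ₀, ρ₁)`.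
Conversely, if `pistar` minimizes the static problem, the mixture
`Pstar = ∫ R^{xy} dpistar` minimizes the dynamic problem and has `Pstar₀₁ = pistar`. -/
theorem schroedinger_static_dynamic_equivalence
    {Ω 𝒳 : Type*} [MeasurableSpace Ω] [StandardBorelSpace Ω]
    [MeasurableSpace 𝒳] [StandardBorelSpace 𝒳]
    (X₀ X₁ : Ω → 𝒳) (hX₀ : Measurable X₀) (hX₁ : Measurable X₁)
    (R : Measure Ω) [IsProbabilityMeasure R]
    (ρ₀ ρ₁ : Measure 𝒳) [IsProbabilityMeasure ρ₀] [IsProbabilityMeasure ρ₁]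
    -- bridges `R^{xy}` : a disintegration of `R` over the endpoint pair
    (Rxy : 𝒳 × 𝒳 → Measure Ω) (hRm : Measurable Rxy)
    (hRprob : ∀ xy, IsProbabilityMeasure (Rxy xy))
    (hRfib : ∀ xy, Rxy xy {ω | (X₀ ω, X₁ ω) ≠ xy} = 0)
    (hRdis : R = (R.map (fun ω => (X₀ ω, X₁ ω))).bind Rxy) :
    -- dynamic minimizer ⟹ static minimizer
    ((∀ Pstar : Measure Ω, IsProbabilityMeasure Pstar →
        Pstar.map X₀ = ρ₀ → Pstar.map X₁ = ρ₁ →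
        (∀ P : Measure Ω, IsProbabilityMeasure P →
          P.map X₀ = ρ₀ → P.map X₁ = ρ₁ →
          relEnt Pstar R ≤ relEnt P R) →
        ((Pstar.map (fun ω => (X₀ ω, X₁ ω))).fst = ρ₀ ∧
         (Pstar.map (fun ω => (X₀ ω, X₁ ω))).snd = ρ₁ ∧
         (∀ π : Measure (𝒳 × 𝒳), IsProbabilityMeasure π →
            π.fst = ρ₀ → π.snd = ρ₁ →
            relEnt (Pstar.map (fun ω => (X₀ ω, X₁ ω)))
                (R.map (fun ω => (X₀ ω, X₁ ω)))
              ≤ relEnt π (R.map (fun ω => (X₀ ω, X₁ ω)))))) ∧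
    -- static minimizer ⟹ dynamic minimizer via `Pstar = pistar.bind Rxy`
    (∀ pistar : Measure (𝒳 × 𝒳), IsProbabilityMeasure pistar →
        pistar.fst = ρ₀ → pistar.snd = ρ₁ →
        (∀ π : Measure (𝒳 × 𝒳), IsProbabilityMeasure π →
          π.fst = ρ₀ → π.snd = ρ₁ →
          relEnt pistar (R.map (fun ω => (X₀ ω, X₁ ω)))
            ≤ relEnt π (R.map (fun ω => (X₀ ω, X₁ ω)))) →
        (IsProbabilityMeasure (pistar.bind Rxy) ∧
         (pistar.bind Rxy).map X₀ = ρ₀ ∧ (pistar.bind Rxy).map X₁ = ρ₁ ∧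
         (∀ P : Measure Ω, IsProbabilityMeasure P →
            P.map X₀ = ρ₀ → P.map X₁ = ρ₁ →
            relEnt (pistar.bind Rxy) R ≤ relEnt P R) ∧
         (pistar.bind Rxy).map (fun ω => (X₀ ω, X₁ ω)) = pistar))) :=
  schroedinger_static_dynamic_equivalence_general X₀ X₁ hX₀ hX₁ R ρ₀ ρ₁ Rxy hRm hRprob hRfib hRdis
end

section
/- Let E be a positive linear map on the cone of positive vectors in ℝⁿ whose projective diameter Δ(E) is finite. Then E is a strict contraction in the Hilbert projective metric with contraction ratio κ(E) ≤ tanh(Δ(E)/4) < 1. -/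
open Real

/-- The Hilbert projective metric on the positive orthant of `ℝⁿ`. -/
noncomputable def dHpos {n : ℕ} (x y : Fin n → ℝ) : ℝ :=
  Real.log ((⨆ i, x i / y i) / (⨅ i, x i / y i))

/-!
Write `x = u + a • y` and `(b - a) • y = u + v` with `u, v` positive, where `a < b` bracket the
ratios `x i / y i`. By linearity `E x i / E y i = (b + a t i) / (1 + t i)` with `t = E v / E u`,
and the spread of `t` is `dHpos (E v) (E u) ≤ Δ`. With `c = log (b / a)` and `s = log t`, the
logarithm of `(b + a t) / (1 + t)` is `log cosh ((s - c) / 2) - log cosh (s / 2)` up to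
constants, and `tanh α - tanh β ≤ 2 tanh ((α - β) / 2)` bounds its variation over a window of
width `Δ` by `tanh (Δ / 4) * c`. Letting `a`, `b` tend to the extreme ratios gives the theorem.
-/

open Filter Topology

namespace Real

theorem tanh_le_tanh {a b : ℝ} (h : b ≤ a) : tanh b ≤ tanh a := by
  by_contra! hlt
  have := artanh_lt_artanh (neg_one_lt_tanh a) (tanh_lt_one b) hlt
  rw [artanh_tanh, artanh_tanh] at this
  linarith

theorem tanh_sub_tanh_le {a b : ℝ} (h : b ≤ a) :
    tanh a - tanh b ≤ 2 * tanh ((a - b) / 2) := by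
  set u := (a + b) / 2
  set δ := (a - b) / 2
  have hcosh : cosh δ ^ 2 ≤ cosh a * cosh b := by
    have : cosh a * cosh b = cosh u ^ 2 + sinh δ ^ 2 := by
      rw [show a = u + δ by ring, show b = u - δ by ring, cosh_add, cosh_sub]
      linear_combination cosh u ^ 2 * cosh_sq δ + sinh δ ^ 2 * cosh_sq u
    nlinarith [cosh_sq δ, one_le_cosh u]
  have hsinh : 0 ≤ sinh (a - b) := sinh_nonneg_iff.mpr (by linarith)
  calc tanh a - tanh b = sinh (a - b) / (cosh a * cosh b) := by
        rw [tanh_eq_sinh_div_cosh, tanh_eq_sinh_div_cosh, sinh_sub,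
          div_sub_div _ _ (cosh_pos a).ne' (cosh_pos b).ne']
    _ ≤ sinh (a - b) / cosh δ ^ 2 := div_le_div_of_nonneg_left hsinh (by positivity) hcosh
    _ = 2 * tanh δ := by
        rw [show a - b = 2 * δ by ring, sinh_two_mul, tanh_eq_sinh_div_cosh]
        field_simp [(cosh_pos δ).ne']

theorem exp_add_exp (x y : ℝ) :
    exp x + exp y = 2 * exp ((x + y) / 2) * cosh ((y - x) / 2) := by
  have hy : exp ((x + y) / 2) * exp ((y - x) / 2) = exp y := by rw [← exp_add]; ring_nf
  have hx : exp ((x + y) / 2) * exp (-((y - x) / 2)) = exp x := by rw [← exp_add]; ring_nf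
  rw [cosh_eq]
  linear_combination -hy - hx

theorem hasDerivAt_log_cosh_half (s : ℝ) :
    HasDerivAt (fun s => log (cosh (s / 2))) (tanh (s / 2) / 2) s := by
  refine ((((hasDerivAt_id' s).div_const 2).cosh).log (cosh_pos _).ne').congr_deriv ?_
  rw [tanh_eq_sinh_div_cosh]
  ring

theorem log_cosh_half_sub_le {s s' c : ℝ} (hss : s ≤ s') (hc : 0 ≤ c) :
    (log (cosh ((s - c) / 2)) - log (cosh ((s' - c) / 2)))
      - (log (cosh (s / 2)) - log (cosh (s' / 2))) ≤ tanh ((s' - s) / 4) * c := by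
  have hderiv : ∀ β,
      HasDerivAt (fun β => log (cosh ((s - β) / 2)) - log (cosh ((s' - β) / 2)))
        (tanh ((s' - β) / 2) / 2 - tanh ((s - β) / 2) / 2) β := by
    intro β
    have hL := fun w =>
      (hasDerivAt_log_cosh_half (w - β)).comp β ((hasDerivAt_id' β).const_sub w)
    exact ((hL s).sub (hL s')).congr_deriv (by ring)
  have hslope : ∀ β,
      tanh ((s' - β) / 2) / 2 - tanh ((s - β) / 2) / 2 ≤ tanh ((s' - s) / 4) := by
    intro β
    have := tanh_sub_tanh_le (a := (s' - β) / 2) (b := (s - β) / 2) (by linarith)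
    rw [show ((s' - β) / 2 - (s - β) / 2) / 2 = (s' - s) / 4 by ring] at this
    linarith
  have := image_sub_le_mul_sub_of_deriv_le (fun β => (hderiv β).differentiableAt)
    (fun β => (hderiv β).deriv ▸ hslope β) hc
  simpa using this

theorem log_exp_add_exp_div (c s : ℝ) :
    log ((exp c + exp s) / (1 + exp s)) =
      c / 2 + log (cosh ((s - c) / 2)) - log (cosh (s / 2)) := by
  have hone : 1 + exp s = 2 * exp (s / 2) * cosh (s / 2) := by simpa using exp_add_exp 0 s
  rw [exp_add_exp, hone, log_div (by positivity) (by positivity),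
    log_mul (by positivity) (by positivity), log_mul (by positivity) (by positivity), log_mul (by positivity) (by positivity),
    log_mul (by positivity) (by positivity), log_exp, log_exp]
  ring

end Real

theorem log_div_le_tanh_mul_log {a b τ T Δ : ℝ} (ha : 0 < a) (hab : a ≤ b) (hτ : 0 < τ)
    (hτT : τ ≤ T) (hΔ : log (T / τ) ≤ Δ) :
    log ((b + a * τ) / (1 + τ) / ((b + a * T) / (1 + T))) ≤ tanh (Δ / 4) * log (b / a) := by
  set c := log (b / a)
  have hc : 0 ≤ c := log_nonneg ((one_le_div ha).mpr hab)
  have hT : 0 < T := hτ.trans_le hτT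
  have hform : ∀ ρ, 0 < ρ →
      (b + a * ρ) / (1 + ρ) = a * ((exp c + exp (log ρ)) / (1 + exp (log ρ))) := by
    intro ρ hρ
    rw [exp_log hρ, exp_log (div_pos (ha.trans_le hab) ha)]
    field_simp
  rw [hform τ hτ, hform T hT, mul_div_mul_left _ _ ha.ne',
    log_div (by positivity) (by positivity), log_exp_add_exp_div, log_exp_add_exp_div]
  have hsecond := log_cosh_half_sub_le (log_le_log hτ hτT) hc
  have hslope : tanh ((log T - log τ) / 4) ≤ tanh (Δ / 4) :=
    tanh_le_tanh (by rw [← log_div hT.ne' hτ.ne']; linarith)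
  linarith [mul_le_mul_of_nonneg_right hslope hc]

theorem antitoneOn_add_mul_div_one_add {a b : ℝ} (hab : a ≤ b) :
    AntitoneOn (fun t => (b + a * t) / (1 + t)) (Set.Ici 0) := by
  intro t₁ ht₁ t₂ ht₂ ht
  simp only [Set.mem_Ici] at ht₁ ht₂
  rw [div_le_div_iff₀ (by linarith) (by linarith)]
  nlinarith

theorem lt_ciInf_of_finite {ι α : Type*} [Finite ι] [Nonempty ι]
    [ConditionallyCompleteLinearOrder α] {f : ι → α} {b : α} (h : ∀ i, b < f i) : b < ⨅ i, f i := by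
  obtain ⟨i, hi⟩ := exists_eq_ciInf_of_finite (f := f)
  exact hi ▸ h i

section HilbertMetric

variable {n : ℕ} [Nonempty (Fin n)]

theorem dHpos_le_log_div {x y : Fin n → ℝ} {lo hi : ℝ} (hlo : 0 < lo)
    (hl : ∀ i, lo ≤ x i / y i) (hh : ∀ i, x i / y i ≤ hi) : dHpos x y ≤ log (hi / lo) := by
  have hinf : lo ≤ ⨅ i, x i / y i := le_ciInf hl
  have hsup : ⨆ i, x i / y i ≤ hi := ciSup_le hh
  have hle : ⨅ i, x i / y i ≤ ⨆ i, x i / y i :=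
    ciInf_le_ciSup (Finite.bddBelow_range _) (Finite.bddAbove_range _)
  exact log_le_log (div_pos (hlo.trans_le (hinf.trans hle)) (hlo.trans_le hinf))
    (div_le_div₀ (by linarith) hsup hlo hinf)

theorem dHpos_map_le_of_bounds (E : (Fin n → ℝ) →ₗ[ℝ] (Fin n → ℝ))
    (hE : ∀ x : Fin n → ℝ, (∀ i, 0 < x i) → ∀ i, 0 < E x i) {Δ : ℝ}
    (hΔ : ∀ x y : Fin n → ℝ, (∀ i, 0 < x i) → (∀ i, 0 < y i) → dHpos (E x) (E y) ≤ Δ)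
    {x y : Fin n → ℝ} (hy : ∀ i, 0 < y i) {a b : ℝ} (ha : 0 < a)
    (hax : ∀ i, a * y i < x i) (hxb : ∀ i, x i < b * y i) :
    dHpos (E x) (E y) ≤ tanh (Δ / 4) * log (b / a) := by
  set u := x - a • y
  set v := b • y - x
  have hu : ∀ i, 0 < u i := fun i => by simp [u]; linarith [hax i]
  have hv : ∀ i, 0 < v i := fun i => by simp [v]; linarith [hxb i]
  have hEu := hE u hu
  have hEv := hE v hv
  have hEy := hE y hy
  set t := fun i => E v i / E u i
  have ht : ∀ i, 0 < t i := fun i => div_pos (hEv i) (hEu i)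
  have hratio : ∀ i, E x i / E y i = (b + a * t i) / (1 + t i) := by
    intro i
    have hu_i : E u i = E x i - a * E y i := by simp [u]
    have hv_i : E v i = b * E y i - E x i := by simp [v]
    have hvt : E v i = t i * E u i := (div_mul_cancel₀ _ (hEu i).ne').symm
    rw [hu_i, hv_i] at hvt
    rw [div_eq_div_iff (hEy i).ne' (by linarith [ht i])]
    linear_combination -hvt
  obtain i₀ := Classical.arbitrary (Fin n)
  have hab : a ≤ b := by nlinarith [hax i₀, hxb i₀, hy i₀]
  set τ := ⨅ i, t i
  set T := ⨆ i, t i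
  have hτ : 0 < τ := lt_ciInf_of_finite ht
  have hτt : ∀ i, τ ≤ t i := ciInf_le (Finite.bddBelow_range t)
  have htT : ∀ i, t i ≤ T := le_ciSup (Finite.bddAbove_range t)
  have hτT : τ ≤ T := (hτt i₀).trans (htT i₀)
  have hT : 0 < T := hτ.trans_le hτT
  have hψ := antitoneOn_add_mul_div_one_add hab
  have hψT : 0 < (b + a * T) / (1 + T) := div_pos (by nlinarith) (by linarith)
  calc dHpos (E x) (E y) ≤ log ((b + a * τ) / (1 + τ) / ((b + a * T) / (1 + T))) :=
        dHpos_le_log_div hψT (fun i => hratio i ▸ hψ (ht i).le hT.le (htT i))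
          (fun i => hratio i ▸ hψ hτ.le (ht i).le (hτt i))
    _ ≤ tanh (Δ / 4) * log (b / a) := log_div_le_tanh_mul_log ha hab hτ hτT (hΔ v u hv hu)

end HilbertMetric

/-- Birkhoff: a positive linear map on the positive orthant of
`ℝⁿ` with finite projective diameter `Δ(E)` is a strict contraction in the
Hilbert projective metric, with contraction ratio at most `tanh(Δ(E)/4) < 1`. -/
theorem birkhoff_contraction
    {n : ℕ} (hn : 0 < n) (E : (Fin n → ℝ) →ₗ[ℝ] (Fin n → ℝ))
    (hE : ∀ x : Fin n → ℝ, (∀ i, 0 < x i) → ∀ i, 0 < E x i)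
    (Δ : ℝ)
    (hΔ : ∀ x y : Fin n → ℝ, (∀ i, 0 < x i) → (∀ i, 0 < y i) →
      dHpos (E x) (E y) ≤ Δ) :
    Real.tanh (Δ / 4) < 1 ∧
    ∀ x y : Fin n → ℝ, (∀ i, 0 < x i) → (∀ i, 0 < y i) →
      dHpos (E x) (E y) ≤ Real.tanh (Δ / 4) * dHpos x y := by
  have : Nonempty (Fin n) := Fin.pos_iff_nonempty.mp hn
  refine ⟨tanh_lt_one _, fun x y hx hy => ?_⟩
  set m := ⨅ i, x i / y i
  set M := ⨆ i, x i / y i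
  have hm : 0 < m := lt_ciInf_of_finite fun i => div_pos (hx i) (hy i)
  have hM : 0 < M :=
    hm.trans_le (ciInf_le_ciSup (Finite.bddBelow_range _) (Finite.bddAbove_range _))
  -- `dHpos_map_le_of_bounds` needs strict bounds, so the bracket `[m, M]` is widened by `exp δ`.
  have hwidened : ∀ δ > 0, dHpos (E x) (E y) ≤ tanh (Δ / 4) * (dHpos x y + 2 * δ) := by
    intro δ hδ
    have hm_lt : m * exp (-δ) < m := mul_lt_of_lt_one_right hm (exp_lt_one_iff.mpr (by linarith))
    have hM_lt : M < M * exp δ := lt_mul_of_one_lt_right hM (one_lt_exp_iff.mpr hδ)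
    have hlo : ∀ i, m * exp (-δ) * y i < x i := fun i =>
      (lt_div_iff₀ (hy i)).mp (hm_lt.trans_le (ciInf_le (Finite.bddBelow_range _) i))
    have hhi : ∀ i, x i < M * exp δ * y i := fun i =>
      (div_lt_iff₀ (hy i)).mp ((le_ciSup (Finite.bddAbove_range _) i).trans_lt hM_lt)
    convert dHpos_map_le_of_bounds E hE hΔ hy (by positivity) hlo hhi using 2
    rw [dHpos, log_div hM.ne' hm.ne', log_div (mul_pos hM (exp_pos _)).ne' (by positivity),
      log_mul hM.ne' (exp_pos _).ne', log_mul hm.ne' (exp_pos _).ne', log_exp, log_exp]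
    ring
  have hlim : Tendsto (fun δ => tanh (Δ / 4) * (dHpos x y + 2 * δ)) (𝓝[>] 0)
      (𝓝 (tanh (Δ / 4) * dHpos x y)) := by
    have : Continuous fun δ : ℝ => tanh (Δ / 4) * (dHpos x y + 2 * δ) := by fun_prop
    simpa using (this.tendsto 0).mono_left nhdsWithin_le_nhds
  exact ge_of_tendsto hlim (eventually_nhdsWithin_of_forall hwidened)
end

section
/- Let E be a positive linear map on the positive orthant of ℝⁿ represented by a matrix with entries q(i,j) satisfying 0 < α ≤ q(i,j) ≤ β < ∞ for all i, j. Then for all strictly positive vectors x, the ratio max_i (Ex)_i / min_i (Ex)_i is at most β/α; consequently the projective diameter of E is at most 2 log(β/α) and E is a strict contraction in the Hilbert metric. -/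
open Real Matrix

/-!
For two rows `i, k` of `Q` write `(Q x)_i = ∑ j, A j * r j` with `A j = Q i j * y j` and
`r j = x j / y j ∈ [m, M]`. A quotient of two linear forms in `r` is maximal at a vertex of the
box `[m, M]ⁿ`, so it suffices to treat `2 × 2` matrices, whose cross-ratio is at most `(β/α)²`.
There the logarithm of the quotient grows at rate at most `κ = (β - α)/(β + α)` in `log (M/m)`,
because two probabilities whose odds ratio is at most `θ` differ by at most
`(√θ - 1)/(√θ + 1)`. Finally `κ = tanh (log (β/α) / 2)`.
-/

theorem Real.tanh_half_log {ρ : ℝ} (hρ : 0 < ρ) : tanh (log ρ / 2) = (ρ - 1) / (ρ + 1) := by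
  set s := exp (log ρ / 2) with hs_def
  have hs : s ^ 2 = ρ := by
    rw [hs_def, ← exp_nat_mul]; push_cast; rw [mul_div_cancel₀ _ two_ne_zero, exp_log hρ]
  have hs0 : 0 < s := exp_pos _
  rw [tanh_eq, exp_neg, ← hs_def, ← hs]
  field_simp

theorem sub_le_of_odds_ratio_le {α β p q : ℝ} (hα : 0 < α) (hαβ : α ≤ β)
    (hp1 : p ≤ 1) (hq0 : 0 ≤ q)
    (h : α ^ 2 * (p * (1 - q)) ≤ β ^ 2 * (q * (1 - p))) :
    (β + α) * (p - q) ≤ β - α := by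
  rcases le_or_gt (p - q) 0 with hδ | hδ
  · nlinarith
  have hv : 0 < q * (1 - p) := by
    by_contra! hv
    have hu : 0 < p * (1 - q) := mul_pos (by linarith) (by linarith)
    nlinarith [mul_pos (pow_pos hα 2) hu, mul_nonneg hq0 (sub_nonneg.2 hp1)]
  -- `p (1-q) (1-δ)² - q (1-p) (1+δ)² = δ ((1-p)(1-q) - pq)²` with `δ = p - q`
  have hodds : q * (1 - p) * (1 + (p - q)) ^ 2 ≤ p * (1 - q) * (1 - (p - q)) ^ 2 := by
    nlinarith [mul_nonneg hδ.le (sq_nonneg ((1 - p) * (1 - q) - p * q))]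
  have hsq : (α * (1 + (p - q))) ^ 2 ≤ (β * (1 - (p - q))) ^ 2 := by
    refine le_of_mul_le_mul_left ?_ hv
    nlinarith [mul_le_mul_of_nonneg_left hodds (sq_nonneg α),
      mul_le_mul_of_nonneg_right h (sq_nonneg (1 - (p - q)))]
  have := (pow_le_pow_iff_left₀ (by nlinarith) (by nlinarith) two_ne_zero).1 hsq
  linarith

theorem mul_exp_add_pos {a b : ℝ} (ha : 0 ≤ a) (hb : 0 ≤ b) (hab : 0 < a + b) (u : ℝ) :
    0 < a * exp u + b := by
  rcases ha.eq_or_lt with rfl | ha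
  · simpa using hab
  · have := exp_pos u; positivity

theorem monotone_birkhoff_potential {α β a b c d : ℝ} (hα : 0 < α) (hαβ : α ≤ β)
    (ha : 0 ≤ a) (hb : 0 ≤ b) (hc : 0 ≤ c) (hd : 0 ≤ d) (hab : 0 < a + b) (hcd : 0 < c + d)
    (h : α ^ 2 * (a * d) ≤ β ^ 2 * (b * c)) :
    Monotone fun u => (β - α) / (β + α) * u + log (c * exp u + d) - log (a * exp u + b) := by
  have hlog {a b : ℝ} (ha : 0 ≤ a) (hb : 0 ≤ b) (hab : 0 < a + b) (u : ℝ) :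
      HasDerivAt (fun u => log (a * exp u + b)) (a * exp u / (a * exp u + b)) u :=
    (((hasDerivAt_exp u).const_mul a).add_const b).log (mul_exp_add_pos ha hb hab u).ne'
  refine monotone_of_hasDerivAt_nonneg (f' := fun u =>
      (β - α) / (β + α) + c * exp u / (c * exp u + d) - a * exp u / (a * exp u + b))
    (fun u => ((((hasDerivAt_id' u).const_mul _).fun_add (hlog hc hd hcd u)).fun_sub
      (hlog ha hb hab u)).congr_deriv (by ring)) fun u => ?_
  -- the derivative is `κ - (p - q)` for `p = a eᵘ / (a eᵘ + b)`, `q = c eᵘ / (c eᵘ + d)`,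
  -- and the odds ratio of `p` and `q` is `a d / (b c)`
  have he := exp_pos u
  have hD1 := mul_exp_add_pos ha hb hab u
  have hD2 := mul_exp_add_pos hc hd hcd u
  have hp1 : 1 - a * exp u / (a * exp u + b) = b / (a * exp u + b) := by field_simp; ring
  have hq1 : 1 - c * exp u / (c * exp u + d) = d / (c * exp u + d) := by field_simp; ring
  have hodds : α ^ 2 * (a * exp u / (a * exp u + b) * (1 - c * exp u / (c * exp u + d)))
      ≤ β ^ 2 * (c * exp u / (c * exp u + d) * (1 - a * exp u / (a * exp u + b))) := by
    rw [hp1, hq1, div_mul_div_comm, div_mul_div_comm, mul_comm (c * exp u + d),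
      ← mul_div_assoc, ← mul_div_assoc, div_le_div_iff_of_pos_right (by positivity)]
    nlinarith [mul_le_mul_of_nonneg_right h he.le]
  have hκ := (le_div_iff₀' (by linarith : 0 < β + α)).2
    (sub_le_of_odds_ratio_le hα hαβ (by rw [div_le_one hD1]; linarith) (by positivity) hodds)
  rw [Pi.zero_apply]
  linarith

-- Birkhoff's bound for the matrix with rows `(a, b)`, `(c, d)` at the vectors `(t, 1)`, `(1, 1)`.
theorem add_mul_le_rpow_mul {α β a b c d t : ℝ} (hα : 0 < α) (hαβ : α ≤ β)
    (ha : 0 ≤ a) (hb : 0 ≤ b) (hc : 0 ≤ c) (hd : 0 ≤ d) (hab : 0 < a + b) (hcd : 0 < c + d)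
    (h : α ^ 2 * (a * d) ≤ β ^ 2 * (b * c)) (ht : 1 ≤ t) :
    (a * t + b) * (c + d) ≤ t ^ ((β - α) / (β + α)) * ((c * t + d) * (a + b)) := by
  have ht0 : 0 < t := by linarith
  have hmono := monotone_birkhoff_potential hα hαβ ha hb hc hd hab hcd h (log_nonneg ht)
  simp only [exp_zero, mul_one, mul_zero, zero_add, exp_log ht0] at hmono
  have hD1 : 0 < a * t + b := by simpa [exp_log ht0] using mul_exp_add_pos ha hb hab (log t)
  have hD2 : 0 < c * t + d := by simpa [exp_log ht0] using mul_exp_add_pos hc hd hcd (log t)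
  rw [← log_le_log_iff (by positivity) (by positivity), log_mul hD1.ne' hcd.ne',
    log_mul (by positivity) (by positivity), log_mul hD2.ne' hab.ne', log_rpow ht0]
  linarith

theorem Finset.sum_mul_ite_mem {ι R : Type*} [Fintype ι] [DecidableEq ι] [CommSemiring R]
    (S : Finset ι) (A : ι → R) (M m : R) :
    ∑ j, A j * (if j ∈ S then M else m) = M * ∑ j ∈ S, A j + m * ∑ j ∈ Sᶜ, A j := by
  rw [← Finset.sum_add_sum_compl S, Finset.mul_sum, Finset.mul_sum]
  congr 1 <;> refine Finset.sum_congr rfl fun j hj => ?_ <;> simp_all [mul_comm]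

theorem exists_finset_sum_mul_ite_le {ι : Type*} [Fintype ι] [DecidableEq ι] (A B r : ι → ℝ)
    {m M : ℝ} (hm : ∀ j, m ≤ r j) (hM : ∀ j, r j ≤ M) :
    ∃ S : Finset ι, (∑ j, A j * r j) * ∑ j, B j * (if j ∈ S then M else m)
      ≤ (∑ j, A j * if j ∈ S then M else m) * ∑ j, B j * r j := by
  set w : ι → ℝ := fun j => A j * ∑ l, B l * r l - (∑ l, A l * r l) * B j
  have hw (u : ι → ℝ) : ∑ j, w j * u j
      = (∑ j, A j * u j) * ∑ j, B j * r j - (∑ j, A j * r j) * ∑ j, B j * u j := by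
    have hwu (j : ι) :
        w j * u j = A j * u j * ∑ l, B l * r l - (∑ l, A l * r l) * (B j * u j) := by
      ring
    simp only [hwu, Finset.sum_sub_distrib, ← Finset.sum_mul, ← Finset.mul_sum]
  refine ⟨Finset.univ.filter fun j => 0 ≤ w j, ?_⟩
  -- moving each `r j` to the end of `[m, M]` selected by the sign of `w j` increases `∑ w r = 0`
  have hle : ∑ j, w j * r j
      ≤ ∑ j, w j * if j ∈ Finset.univ.filter fun j => 0 ≤ w j then M else m := by
    refine Finset.sum_le_sum fun j _ => ?_
    by_cases hj : 0 ≤ w j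
    · simpa [hj] using mul_le_mul_of_nonneg_left (hM j) hj
    · simpa [hj] using mul_le_mul_of_nonpos_left (hm j) (le_of_not_ge hj)
  rw [hw, hw] at hle
  linarith

theorem iSup_div_iInf_le_of_le_mul {ι : Type*} [Finite ι] [Nonempty ι] {f : ι → ℝ} {T : ℝ}
    (hf : ∀ i, 0 < f i) (h : ∀ i k, f i ≤ T * f k) : (⨆ i, f i) / ⨅ i, f i ≤ T := by
  obtain ⟨k, hk⟩ := exists_eq_ciInf_of_finite (f := f)
  rw [← hk, div_le_iff₀ (hf k)]
  exact ciSup_le fun i => h i k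

theorem iSup_div_iInf_pos {ι : Type*} [Finite ι] [Nonempty ι] {f : ι → ℝ}
    (hf : ∀ i, 0 < f i) : 0 < (⨆ i, f i) / ⨅ i, f i := by
  obtain ⟨k, hk⟩ := exists_eq_ciInf_of_finite (f := f)
  rw [← hk]
  exact div_pos ((hf k).trans_le (le_ciSup (Finite.bddAbove_range f) k)) (hf k)

theorem mul_le_mul_of_mem_Icc {α β a b : ℝ} (hα : 0 ≤ α) (ha : a ∈ Set.Icc α β)
    (hb : b ∈ Set.Icc α β) : α * a ≤ β * b :=
  calc α * a ≤ α * β := mul_le_mul_of_nonneg_left ha.2 hα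
    _ = β * α := mul_comm α β
    _ ≤ β * b := mul_le_mul_of_nonneg_left hb.1 (hα.trans (ha.1.trans ha.2))

theorem sum_mul_mul_sum_le_rpow {ι : Type*} [Fintype ι] {α β m M : ℝ} (hα : 0 < α) (hαβ : α ≤ β)
    {A B r : ι → ℝ} (hA : ∀ j, 0 ≤ A j) (hB : ∀ j, 0 ≤ B j)
    (hAB : ∀ j, α * A j ≤ β * B j) (hBA : ∀ j, α * B j ≤ β * A j) (hA0 : 0 < ∑ j, A j)
    (hm : 0 < m) (hmM : m ≤ M) (hrm : ∀ j, m ≤ r j) (hrM : ∀ j, r j ≤ M) :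
    (∑ j, A j * r j) * ∑ j, B j
      ≤ (M / m) ^ ((β - α) / (β + α)) * ((∑ j, B j * r j) * ∑ j, A j) := by
  classical
  obtain ⟨S, hS⟩ := exists_finset_sum_mul_ite_le A B r hrm hrM
  rw [Finset.sum_mul_ite_mem, Finset.sum_mul_ite_mem] at hS
  rw [← Finset.sum_add_sum_compl S A] at hA0 ⊢
  rw [← Finset.sum_add_sum_compl S B]
  set T := (M / m) ^ ((β - α) / (β + α))
  set a := ∑ j ∈ S, A j
  set b := ∑ j ∈ Sᶜ, A j
  set c := ∑ j ∈ S, B j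
  set d := ∑ j ∈ Sᶜ, B j
  have hsum_le {s : Finset ι} {F G : ι → ℝ} (h : ∀ j, α * F j ≤ β * G j) :
      α * ∑ j ∈ s, F j ≤ β * ∑ j ∈ s, G j := by
    simpa only [Finset.mul_sum] using Finset.sum_le_sum fun j _ => h j
  have ha : 0 ≤ a := Finset.sum_nonneg fun j _ => hA j
  have hb : 0 ≤ b := Finset.sum_nonneg fun j _ => hA j
  have hc : 0 ≤ c := Finset.sum_nonneg fun j _ => hB j
  have hd : 0 ≤ d := Finset.sum_nonneg fun j _ => hB j
  have hac : α * a ≤ β * c := hsum_le hAB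
  have hdb : α * d ≤ β * b := hsum_le hBA
  have hcd : 0 < c + d := by nlinarith [hsum_le (s := S) hAB, hsum_le (s := Sᶜ) hAB]
  have hodds : α ^ 2 * (a * d) ≤ β ^ 2 * (b * c) := by
    nlinarith [mul_le_mul hac hdb (mul_nonneg hα.le hd) (mul_nonneg (hα.le.trans hαβ) hc)]
  have htwo : (M * a + m * b) * (c + d) ≤ T * ((M * c + m * d) * (a + b)) := by
    have := mul_le_mul_of_nonneg_left
      (add_mul_le_rpow_mul hα hαβ ha hb hc hd hA0 hcd hodds ((one_le_div hm).2 hmM)) hm.le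
    have hMm : m * (M / m) = M := mul_div_cancel₀ M hm.ne'
    linear_combination this - (c + d) * a * hMm + T * (a + b) * c * hMm
  have hv : 0 < M * c + m * d := by nlinarith
  have hBr : 0 ≤ ∑ j, B j * r j :=
    Finset.sum_nonneg fun j _ => mul_nonneg (hB j) (hm.le.trans (hrm j))
  refine le_of_mul_le_mul_right ?_ hv
  nlinarith [mul_le_mul_of_nonneg_right hS hcd.le, mul_le_mul_of_nonneg_left htwo hBr]

theorem Matrix.mul_mulVec_le_mul_mulVec {m n : Type*} [Fintype n] {Q : Matrix m n ℝ} {α β : ℝ}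
    (hα : 0 ≤ α) (hQ : ∀ i j, α ≤ Q i j ∧ Q i j ≤ β) {v : n → ℝ} (hv : ∀ j, 0 ≤ v j) (i k : m) :
    α * (Q *ᵥ v) i ≤ β * (Q *ᵥ v) k := by
  simp only [mulVec, dotProduct, Finset.mul_sum, ← mul_assoc]
  exact Finset.sum_le_sum fun j _ =>
    mul_le_mul_of_nonneg_right (mul_le_mul_of_mem_Icc hα (hQ i j) (hQ k j)) (hv j)

theorem Matrix.mulVec_pos {m n : Type*} [Fintype n] [Nonempty n] {Q : Matrix m n ℝ}
    (hQ : ∀ i j, 0 < Q i j) {v : n → ℝ} (hv : ∀ j, 0 < v j) (i : m) : 0 < (Q *ᵥ v) i :=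
  Finset.sum_pos (fun j _ => mul_pos (hQ i j) (hv j)) Finset.univ_nonempty

theorem Matrix.mulVec_mul_mulVec_le_rpow {m n : Type*} [Fintype n] [Nonempty n]
    {Q : Matrix m n ℝ} {α β : ℝ} (hα : 0 < α) (hαβ : α ≤ β) (hQ : ∀ i j, α ≤ Q i j ∧ Q i j ≤ β)
    {x y : n → ℝ} (hx : ∀ j, 0 < x j) (hy : ∀ j, 0 < y j) (i k : m) :
    (Q *ᵥ x) i * (Q *ᵥ y) k
      ≤ ((⨆ j, x j / y j) / ⨅ j, x j / y j) ^ ((β - α) / (β + α))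
        * ((Q *ᵥ x) k * (Q *ᵥ y) i) := by
  have hr (j : n) : 0 < x j / y j := div_pos (hx j) (hy j)
  obtain ⟨l, hl⟩ := exists_eq_ciInf_of_finite (f := fun j => x j / y j)
  have hrm (j : n) : ⨅ j, x j / y j ≤ x j / y j :=
    ciInf_le (Finite.bddBelow_range fun j => x j / y j) j
  have hrM (j : n) : x j / y j ≤ ⨆ j, x j / y j :=
    le_ciSup (Finite.bddAbove_range fun j => x j / y j) j
  have hQx (i : m) : (Q *ᵥ x) i = ∑ j, Q i j * y j * (x j / y j) :=
    Finset.sum_congr rfl fun j _ => by field_simp [(hy j).ne']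
  have hAB (i k : m) (j : n) : α * (Q i j * y j) ≤ β * (Q k j * y j) := by
    simpa only [mul_assoc] using
      mul_le_mul_of_nonneg_right (mul_le_mul_of_mem_Icc hα.le (hQ i j) (hQ k j)) (hy j).le
  rw [hQx, hQx]
  exact sum_mul_mul_sum_le_rpow hα hαβ (fun j => (mul_pos (hα.trans_le (hQ i j).1) (hy j)).le)
    (fun j => (mul_pos (hα.trans_le (hQ k j).1) (hy j)).le) (hAB i k) (hAB k i)
    (mulVec_pos (fun i j => hα.trans_le (hQ i j).1) hy i) (hl ▸ hr l)
    ((hrm l).trans (hrM l)) hrm hrM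

theorem dHpos_le_log {n : ℕ} [Nonempty (Fin n)] {u w : Fin n → ℝ} {T : ℝ} (hu : ∀ i, 0 < u i)
    (hw : ∀ i, 0 < w i) (h : ∀ i k, u i * w k ≤ T * (u k * w i)) : dHpos u w ≤ log T := by
  have hr (i : Fin n) : 0 < u i / w i := div_pos (hu i) (hw i)
  refine log_le_log (iSup_div_iInf_pos hr) (iSup_div_iInf_le_of_le_mul hr fun i k => ?_)
  rw [div_le_iff₀ (hw i), mul_div_assoc', div_mul_eq_mul_div, le_div_iff₀ (hw k)]
  linarith [h i k]

/-- a positive matrix with entries in `[α, β]` (for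
`0 < α ≤ β`) maps positive vectors to vectors whose component ratio is at
most `β/α`; hence its projective diameter is at most `2 log(β/α)` and it is a
strict contraction in the Hilbert metric with ratio `tanh((2 log(β/α))/4) < 1`. -/
theorem positive_matrix_contraction
    {n : ℕ} (hn : 0 < n) (Q : Matrix (Fin n) (Fin n) ℝ)
    (α β : ℝ) (hα : 0 < α) (hαβ : α ≤ β)
    (hQ : ∀ i j, α ≤ Q i j ∧ Q i j ≤ β) :
    (∀ x : Fin n → ℝ, (∀ i, 0 < x i) →
      (⨆ i, Q.mulVec x i) / (⨅ i, Q.mulVec x i) ≤ β / α) ∧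
    (∀ x y : Fin n → ℝ, (∀ i, 0 < x i) → (∀ i, 0 < y i) →
      dHpos (Q.mulVec x) (Q.mulVec y) ≤ 2 * Real.log (β / α)) ∧
    Real.tanh ((2 * Real.log (β / α)) / 4) < 1 ∧
    (∀ x y : Fin n → ℝ, (∀ i, 0 < x i) → (∀ i, 0 < y i) →
      dHpos (Q.mulVec x) (Q.mulVec y)
        ≤ Real.tanh ((2 * Real.log (β / α)) / 4) * dHpos x y) := by
  have : Nonempty (Fin n) := Fin.pos_iff_nonempty.mp hn
  have hβ : 0 < β := hα.trans_le hαβ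
  have hQpos (i j : Fin n) : 0 < Q i j := hα.trans_le (hQ i j).1
  have hrow {v : Fin n → ℝ} (hv : ∀ i, 0 < v i) (i k : Fin n) :
      α * (Q *ᵥ v) i ≤ β * (Q *ᵥ v) k :=
    Q.mul_mulVec_le_mul_mulVec hα.le hQ (fun j => (hv j).le) i k
  have hκ : tanh (2 * log (β / α) / 4) = (β - α) / (β + α) := by
    rw [show 2 * log (β / α) / 4 = log (β / α) / 2 by ring, tanh_half_log (div_pos hβ hα)]
    field_simp
  refine ⟨fun x hx => ?_, fun x y hx hy => ?_, tanh_lt_one _, fun x y hx hy => ?_⟩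
  · refine iSup_div_iInf_le_of_le_mul (mulVec_pos hQpos hx) fun i k => ?_
    rw [div_mul_eq_mul_div, le_div_iff₀ hα, mul_comm]
    exact hrow hx i k
  · rw [show 2 * log (β / α) = log ((β / α) ^ 2) by rw [log_pow]; norm_num]
    refine dHpos_le_log (mulVec_pos hQpos hx) (mulVec_pos hQpos hy) fun i k => ?_
    have := mul_le_mul (hrow hx i k) (hrow hy k i) (mul_pos hα (mulVec_pos hQpos hy k)).le
      (mul_pos hβ (mulVec_pos hQpos hx k)).le
    rw [div_pow, div_mul_eq_mul_div, le_div_iff₀ (by positivity)]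
    linarith
  · rw [hκ]
    conv_rhs => rw [dHpos, ← log_rpow (iSup_div_iInf_pos fun j => div_pos (hx j) (hy j))]
    exact dHpos_le_log (mulVec_pos hQpos hx) (mulVec_pos hQpos hy)
      (Q.mulVec_mul_mulVec_le_rpow hα hαβ hQ hx hy)
end

section
/- In the finite-dimensional Schrödinger system setup, suppose C = E† ∘ E_{p₀} ∘ E ∘ E_{p₁} where E is a positive linear map with adjoint E†, E_{p₀}(u) = ρ₀/u and E_{p₁}(u) = ρ₁/u are componentwise division maps with ρ₀, ρ₁ fixed positive vectors satisfying ⟨u, E_{p₀}(u)⟩ = 1 and ⟨E_{p₁}(u), u⟩ = 1 for all strictly positive u (i.e., Σᵢ ρ₀ᵢ = Σᵢ ρ₁ᵢ = 1 in the appropriate pairing). If h is a strictly positive vector with C(h) = λh for some λ > 0, then λ = 1. -/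
open Matrix Finset

/- Pair the eigen-equation `C h = λ h` with `E_{ρ₁}(h) = ρ₁ / h`. On the right this gives
`λ ⟨ρ₁ / h, h⟩ = λ ∑ ρ₁ = λ`. On the left, moving `Qᵀ` across the pairing turns it into
`⟨Q (ρ₁ / h), ρ₀ / Q (ρ₁ / h)⟩ = ∑ ρ₀ = 1`; this needs `Q (ρ₁ / h)` to have no zero entries,
which is where the positivity of `Q`, `ρ₁` and `h` enters. -/

theorem Matrix.mulVec_pos_s12 {m n α : Type*} [Fintype n] [Nonempty n]
    [Semiring α] [PartialOrder α] [IsStrictOrderedRing α]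
    {A : Matrix m n α} (hA : ∀ i j, 0 < A i j) {x : n → α} (hx : ∀ j, 0 < x j) (i : m) :
    0 < (A *ᵥ x) i :=
  Finset.sum_pos (fun j _ => mul_pos (hA i j) (hx j)) univ_nonempty

theorem dotProduct_div_eq_sum {ι K : Type*} [Fintype ι] [Semifield K]
    {w : ι → K} (hw : ∀ i, w i ≠ 0) (ρ : ι → K) :
    w ⬝ᵥ (fun i => ρ i / w i) = ∑ i, ρ i :=
  Finset.sum_congr rfl fun i _ => mul_div_cancel₀ (ρ i) (hw i)

theorem schroedinger_iteration_eigenvalue_one_general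
    {n : ℕ} (Q : Matrix (Fin n) (Fin n) ℝ)
    (hQ : ∀ i j, 0 < Q i j)
    (ρ₀ ρ₁ : Fin n → ℝ) (hρ₁ : ∀ i, 0 < ρ₁ i)
    (hρ₀sum : ∑ i, ρ₀ i = 1) (hρ₁sum : ∑ i, ρ₁ i = 1)
    (h : Fin n → ℝ) (hpos : ∀ i, 0 < h i)
    (lam : ℝ)
    (heig : Qᵀ.mulVec
        (fun i => ρ₀ i / (Q.mulVec (fun j => ρ₁ j / h j)) i) = lam • h) :
    lam = 1 := by
  have : Nonempty (Fin n) :=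
    univ_nonempty_iff.mp (nonempty_of_sum_ne_zero (hρ₀sum ▸ one_ne_zero))
  set u : Fin n → ℝ := fun j => ρ₁ j / h j
  have hQu : ∀ i, (Q *ᵥ u) i ≠ 0 := fun i =>
    (Q.mulVec_pos_s12 hQ (fun j => div_pos (hρ₁ j) (hpos j)) i).ne'
  calc lam = lam * (h ⬝ᵥ u) := by
        rw [dotProduct_div_eq_sum (fun i => (hpos i).ne'), hρ₁sum, mul_one]
    _ = u ⬝ᵥ (Qᵀ *ᵥ fun i => ρ₀ i / (Q *ᵥ u) i) := by
        rw [heig, dotProduct_smul, dotProduct_comm, smul_eq_mul]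
    _ = 1 := by
        rw [dotProduct_transpose_mulVec, dotProduct_comm, dotProduct_div_eq_sum hQu, hρ₀sum]

/-- in the discrete Schrödinger system, with
`C = E† ∘ E_{ρ₀} ∘ E ∘ E_{ρ₁}` (componentwise divisions by positive
probability vectors `ρ₀, ρ₁`), any positive eigenvector of `C` has
eigenvalue `λ = 1`. -/
theorem schroedinger_iteration_eigenvalue_one
    {n : ℕ} (Q : Matrix (Fin n) (Fin n) ℝ)
    (hQ : ∀ i j, 0 < Q i j)
    (ρ₀ ρ₁ : Fin n → ℝ) (hρ₀ : ∀ i, 0 < ρ₀ i) (hρ₁ : ∀ i, 0 < ρ₁ i)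
    (hρ₀sum : ∑ i, ρ₀ i = 1) (hρ₁sum : ∑ i, ρ₁ i = 1)
    (h : Fin n → ℝ) (hpos : ∀ i, 0 < h i)
    (lam : ℝ) (hlam : 0 < lam)
    (heig : Qᵀ.mulVec
        (fun i => ρ₀ i / (Q.mulVec (fun j => ρ₁ j / h j)) i) = lam • h) :
    lam = 1 :=
  schroedinger_iteration_eigenvalue_one_general Q hQ ρ₀ ρ₁ hρ₁ hρ₀sum hρ₁sum h hpos lam heig
end

section
/- Discrete Schrödinger system with killing: let Q be an n×n matrix with strictly positive entries, r a strictly positive vector in ℝⁿ, ρ₀ a strictly positive probability vector, ρ₁ a strictly positive vector with Σᵢ ρ₁ᵢ < 1, and set c₁ = 1 − Σᵢ ρ₁ᵢ > 0. Then there exists a 4-tuple of strictly positive quantities (φ̂₁ ∈ ℝⁿ, ψ̂₁ ∈ ℝ, φ₀ ∈ ℝⁿ, ψ₀ ∈ ℝ), unique up to a common positive scaling (φ̂₁, ψ̂₁) ↦ (cφ̂₁, cψ̂₁), (φ₀, ψ₀) ↦ (c⁻¹φ₀, c⁻¹ψ₀), satisfying: φ̂₁ = Qᵀ(ρ₀/φ₀),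 ψ̂₁ = ⟨ρ₀/φ₀, r⟩, φ₀ = Q(ρ₁/φ̂₁) + (c₁/ψ̂₁)·r, and ψ₀ = c₁/ψ̂₁. -/
open Matrix Finset Real Filter Topology

/-!
Adjoining a coffin state turns the system into a matrix-scaling problem for the positive kernel
`[Q | r]`: with `a = ρ₀ / φ₀` and `b = (ρ₁ / φ̂₁, c₁ / ψ̂₁)`, the equations say exactly that
`aᵢ [Q | r]ᵢⱼ bⱼ` has row sums `ρ₀` and column sums `(ρ₁, c₁)`.

Such a scaling exists: the maximiser `P` of `-KL(P ‖ [Q | r])` over the transport polytope is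
strictly positive, since the entropy has infinite slope at `0`, and it is stationary along every
direction with zero marginals, which forces `log (P / [Q | r])` to split as `uᵢ + vⱼ`.
It is unique up to `(a, b) ↦ (c a, c⁻¹ b)`: if `P' = P fᵢ gⱼ` has the same marginals as `P`, then
`∑ P (f g - 1) log (f g) = ∑ (P' - P) (log f + log g) = 0` with nonnegative terms, so `fᵢ gⱼ = 1`.
-/

section Field

variable {K : Type*} [Field K]

lemma mul_div_eq_self_iff {x y z : K} (hx : x ≠ 0) (hy : y ≠ 0) : z * (x / y) = x ↔ z = y := by
  rw [mul_div_assoc', div_eq_iff hy, mul_comm x y]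
  exact mul_left_inj' hx

lemma div_mul_eq_self_iff {x y z : K} (hx : x ≠ 0) (hy : y ≠ 0) : x / y * z = x ↔ z = y := by
  rw [mul_comm]
  exact mul_div_eq_self_iff hx hy

lemma eq_inv_mul_of_div_eq_mul_div {x y y' c : K} (hx : x ≠ 0) (hy' : y' ≠ 0)
    (h : x / y' = c * (x / y)) : y' = c⁻¹ * y := by
  have hc : c ≠ 0 := by rintro rfl; simp [hx, hy'] at h
  have hy : y ≠ 0 := by rintro rfl; simp [hx, hy'] at h
  field_simp at h ⊢
  exact h.symm

end Field

lemma sub_one_mul_log_pos {x : ℝ} (hx : 0 < x) (hx1 : x ≠ 1) : 0 < (x - 1) * log x := by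
  rcases hx1.lt_or_gt with h | h
  · exact mul_pos_of_neg_of_neg (sub_neg.2 h) (log_neg hx h)
  · exact mul_pos (sub_pos.2 h) (log_pos h)

section RelEntropy

variable {α : Type*} [Fintype α]

noncomputable def negRelEntropy (w x : α → ℝ) : ℝ :=
  ∑ k, (x k * log (w k) + negMulLog (x k))

theorem continuous_negRelEntropy (w : α → ℝ) : Continuous (negRelEntropy w) := by
  unfold negRelEntropy
  fun_prop

theorem hasDerivAt_negRelEntropy_add_smul (w : α → ℝ) {x : α → ℝ} (hx : ∀ k, 0 < x k)
    (d : α → ℝ) :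
    HasDerivAt (fun t : ℝ => negRelEntropy w (x + t • d))
      (∑ k, d k * (log (w k) - log (x k) - 1)) 0 := by
  simp only [negRelEntropy, Pi.add_apply, Pi.smul_apply, smul_eq_mul]
  refine HasDerivAt.fun_sum fun k _ => ?_
  have hline : HasDerivAt (fun t : ℝ => x k + t * d k) (d k) 0 := by
    simpa using ((hasDerivAt_id (0 : ℝ)).mul_const (d k)).const_add (x k)
  have hlog : HasDerivAt negMulLog (-log (x k) - 1) (x k + 0 * d k) := by
    simpa using hasDerivAt_negMulLog (hx k).ne'
  refine ((hline.mul_const (log (w k))).add (hlog.comp 0 hline)).congr_deriv ?_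
  ring

theorem le_negRelEntropy_segment_of_apply_eq_zero (w : α → ℝ) {x σ : α → ℝ}
    (hx : ∀ k, 0 ≤ x k) (hσ : ∀ k, 0 ≤ σ k) {k₀ : α} (hxk₀ : x k₀ = 0) {t : ℝ}
    (ht₀ : 0 ≤ t) (ht₁ : t ≤ 1) :
    (1 - t) * negRelEntropy w x + t * negRelEntropy w σ - t * σ k₀ * log t ≤
      negRelEntropy w ((1 - t) • x + t • σ) := by
  set f : α → ℝ → ℝ := fun k y => y * log (w k) + negMulLog y
  set gap : α → ℝ := fun k => f k ((1 - t) * x k + t * σ k) - ((1 - t) * f k (x k) + t * f k (σ k))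
  have hgap : ∀ k, 0 ≤ gap k := fun k => by
    have := concaveOn_negMulLog.2 (Set.mem_Ici.2 (hx k)) (Set.mem_Ici.2 (hσ k))
      (sub_nonneg.2 ht₁) ht₀ (by ring)
    simp only [smul_eq_mul] at this
    simp only [gap, f]
    linarith
  have hgap₀ : gap k₀ = -(t * σ k₀ * log t) := by
    simp only [gap, f, hxk₀, mul_zero, zero_add, negMulLog_zero, negMulLog_mul]
    simp only [negMulLog]
    ring
  have hsum : negRelEntropy w ((1 - t) • x + t • σ) =
      (1 - t) * negRelEntropy w x + t * negRelEntropy w σ + ∑ k, gap k := by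
    simp only [negRelEntropy, Finset.mul_sum, ← Finset.sum_add_distrib]
    refine Finset.sum_congr rfl fun k _ => ?_
    simp only [gap, f, Pi.add_apply, Pi.smul_apply, smul_eq_mul]
    ring
  linarith [Finset.single_le_sum (fun k _ => hgap k) (Finset.mem_univ k₀)]

theorem pos_of_isMaxOn_negRelEntropy (w : α → ℝ) {K : Set (α → ℝ)} (hK : Convex ℝ K)
    (hK₀ : ∀ y ∈ K, ∀ k, 0 ≤ y k) {σ : α → ℝ} (hσK : σ ∈ K) (hσ : ∀ k, 0 < σ k)
    {x : α → ℝ} (hxK : x ∈ K) (hmax : IsMaxOn (negRelEntropy w) K x) (k : α) : 0 < x k := by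
  refine (hK₀ x hxK k).lt_of_ne' fun hxk => ?_
  set F := negRelEntropy w
  obtain ⟨t, ⟨ht₀, ht₁⟩, hlog⟩ : ∃ t ∈ Set.Ioc (0 : ℝ) 1, σ k * log t < F σ - F x :=
    (Filter.Eventually.and (Ioc_mem_nhdsGT one_pos) <|
      (tendsto_log_nhdsGT_zero.const_mul_atBot (hσ k)).eventually (eventually_lt_atBot _)).exists
  have hgain := le_negRelEntropy_segment_of_apply_eq_zero w (hK₀ x hxK) (fun k => (hσ k).le)
    hxk ht₀.le ht₁
  have hle : F ((1 - t) • x + t • σ) ≤ F x := hmax (hK hxK hσK (by linarith) ht₀.le (by ring))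
  nlinarith [mul_lt_mul_of_pos_left hlog ht₀]

theorem sum_mul_log_eq_zero_of_isMaxOn_negRelEntropy (w : α → ℝ) {K : Set (α → ℝ)}
    {x d : α → ℝ} (hx : ∀ k, 0 < x k) (hmax : IsMaxOn (negRelEntropy w) K x)
    (hd : ∀ᶠ t in 𝓝 (0 : ℝ), x + t • d ∈ K) :
    ∑ k, d k * (log (w k) - log (x k) - 1) = 0 :=
  IsLocalMax.hasDerivAt_eq_zero (hd.mono fun t ht => by simpa using hmax ht)
    (hasDerivAt_negRelEntropy_add_smul w hx d)

end RelEntropy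

section TransportPolytope

variable {ι κ : Type*} [Fintype ι] [Fintype κ]

def transportPolytope (p : ι → ℝ) (q : κ → ℝ) : Set (ι × κ → ℝ) :=
  {P | (∀ k, 0 ≤ P k) ∧ (∀ i, ∑ j, P (i, j) = p i) ∧ ∀ j, ∑ i, P (i, j) = q j}

theorem convex_transportPolytope (p : ι → ℝ) (q : κ → ℝ) : Convex ℝ (transportPolytope p q) := by
  rintro P ⟨hP₀, hProw, hPcol⟩ P' ⟨hP'₀, hP'row, hP'col⟩ s t hs ht hst
  refine ⟨fun k => ?_, fun i => ?_, fun j => ?_⟩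
  · have := hP₀ k
    have := hP'₀ k
    simp only [Pi.add_apply, Pi.smul_apply, smul_eq_mul]
    positivity
  · simp only [Pi.add_apply, Pi.smul_apply, smul_eq_mul, Finset.sum_add_distrib, ← Finset.mul_sum,
      hProw, hP'row, ← add_mul, hst, one_mul]
  · simp only [Pi.add_apply, Pi.smul_apply, smul_eq_mul, Finset.sum_add_distrib, ← Finset.mul_sum,
      hPcol, hP'col, ← add_mul, hst, one_mul]

theorem isCompact_transportPolytope (p : ι → ℝ) (q : κ → ℝ) :
    IsCompact (transportPolytope p q) := by
  have hclosed : IsClosed (transportPolytope p q) := by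
    simp only [transportPolytope, Set.ofPred_and, Set.ofPred_forall]
    refine .inter (isClosed_iInter fun k => isClosed_le continuous_const (continuous_apply k))
      (.inter (isClosed_iInter fun i => isClosed_eq (by fun_prop) continuous_const)
        (isClosed_iInter fun j => isClosed_eq (by fun_prop) continuous_const))
  refine (isCompact_Icc (a := 0) (b := fun k => p k.1)).of_isClosed_subset hclosed
    fun P ⟨hP₀, hProw, _⟩ => ⟨hP₀, fun k => ?_⟩
  exact (Finset.single_le_sum (fun j _ => hP₀ (k.1, j)) (Finset.mem_univ k.2)).trans_eq (hProw k.1)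

theorem mul_mem_transportPolytope {p : ι → ℝ} {q : κ → ℝ} (hp : ∀ i, 0 ≤ p i)
    (hq : ∀ j, 0 ≤ q j) (hp₁ : ∑ i, p i = 1) (hq₁ : ∑ j, q j = 1) :
    (fun k : ι × κ => p k.1 * q k.2) ∈ transportPolytope p q :=
  ⟨fun k => mul_nonneg (hp k.1) (hq k.2), fun i => by simp only [← Finset.mul_sum, hq₁, mul_one],
    fun j => by simp only [← Finset.sum_mul, hp₁, one_mul]⟩

theorem eventually_add_smul_mem_transportPolytope {p : ι → ℝ} {q : κ → ℝ} {P d : ι × κ → ℝ}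
    (hP : P ∈ transportPolytope p q) (hP₀ : ∀ k, 0 < P k) (hdrow : ∀ i, ∑ j, d (i, j) = 0)
    (hdcol : ∀ j, ∑ i, d (i, j) = 0) :
    ∀ᶠ t in 𝓝 (0 : ℝ), P + t • d ∈ transportPolytope p q := by
  have hpos : ∀ᶠ t in 𝓝 (0 : ℝ), ∀ k, 0 < P k + t * d k := by
    refine eventually_all.2 fun k => ?_
    have : Continuous fun t : ℝ => P k + t * d k := by fun_prop
    exact this.tendsto 0 |>.eventually (eventually_gt_nhds (by simpa using hP₀ k))
  filter_upwards [hpos] with t ht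
  refine ⟨fun k => (ht k).le, fun i => ?_, fun j => ?_⟩
  · simp only [Pi.add_apply, Pi.smul_apply, smul_eq_mul, Finset.sum_add_distrib, ← Finset.mul_sum,
      hP.2.1, hdrow, mul_zero, add_zero]
  · simp only [Pi.add_apply, Pi.smul_apply, smul_eq_mul, Finset.sum_add_distrib, ← Finset.mul_sum,
      hP.2.2, hdcol, mul_zero, add_zero]

end TransportPolytope

section Scaling

variable {ι κ : Type*}

theorem sum_mul_mul_eq_mul_mulVec {R : Type*} [CommSemiring R] [Fintype κ] (M : Matrix ι κ R)
    (a : ι → R) (b : κ → R) (i : ι) :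
    ∑ j, a i * M i j * b j = a i * (M *ᵥ b) i := by
  simp only [mulVec, dotProduct, Finset.mul_sum, mul_assoc]

theorem sum_mul_mul_eq_transpose_mulVec_mul {R : Type*} [CommSemiring R] [Fintype ι]
    (M : Matrix ι κ R) (a : ι → R) (b : κ → R) (j : κ) :
    ∑ i, a i * M i j * b j = (Mᵀ *ᵥ a) j * b j := by
  simp only [mulVec, dotProduct, transpose_apply, Finset.sum_mul, mul_comm (M _ j)]

variable [Fintype ι] [Fintype κ]

theorem exists_pos_scaling {M : Matrix ι κ ℝ} (hM : ∀ i j, 0 < M i j) {p : ι → ℝ} {q : κ → ℝ}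
    (hp : ∀ i, 0 < p i) (hq : ∀ j, 0 < q j) (hp₁ : ∑ i, p i = 1) (hq₁ : ∑ j, q j = 1) :
    ∃ (a : ι → ℝ) (b : κ → ℝ), (∀ i, 0 < a i) ∧ (∀ j, 0 < b j) ∧
      a * (M *ᵥ b) = p ∧ (Mᵀ *ᵥ a) * b = q := by
  classical
  obtain ⟨i₀, -, -⟩ := Finset.exists_ne_zero_of_sum_ne_zero (hp₁.trans_ne one_ne_zero)
  obtain ⟨j₀, -, -⟩ := Finset.exists_ne_zero_of_sum_ne_zero (hq₁.trans_ne one_ne_zero)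
  set w : ι × κ → ℝ := fun k => M k.1 k.2
  have hσ := mul_mem_transportPolytope (fun i => (hp i).le) (fun j => (hq j).le) hp₁ hq₁
  obtain ⟨P, hPK, hmax⟩ := (isCompact_transportPolytope p q).exists_isMaxOn ⟨_, hσ⟩
    (continuous_negRelEntropy w).continuousOn
  have hP₀ : ∀ k, 0 < P k := pos_of_isMaxOn_negRelEntropy w (convex_transportPolytope p q)
    (fun _ hy => hy.1) hσ (fun k => mul_pos (hp k.1) (hq k.2)) hPK hmax
  -- stationarity along `(δᵢ - δᵢ₀) ⊗ (δⱼ - δⱼ₀)` makes `log (P / M)` a sum `u i + v j`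
  set h : ι × κ → ℝ := fun k => log (P k) - log (w k)
  have hrect : ∀ i j, h (i, j) = h (i, j₀) + (h (i₀, j) - h (i₀, j₀)) := by
    intro i j
    set x : ι → ℝ := Pi.single i 1 - Pi.single i₀ 1
    set y : κ → ℝ := Pi.single j 1 - Pi.single j₀ 1
    have hx : ∑ i, x i = 0 := by simp [x, Finset.sum_sub_distrib]
    have hy : ∑ j, y j = 0 := by simp [y, Finset.sum_sub_distrib]
    have hstat := sum_mul_log_eq_zero_of_isMaxOn_negRelEntropy w hP₀ hmax
      (eventually_add_smul_mem_transportPolytope (d := fun k => x k.1 * y k.2) hPK hP₀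
        (fun i => by simp only [← Finset.mul_sum, hy, mul_zero])
        (fun j => by simp only [← Finset.sum_mul, hx, zero_mul]))
    simp only [x, y, h, Pi.sub_apply, Pi.single_apply, mul_sub, mul_ite, mul_one, mul_zero, sub_mul,
      ite_mul, one_mul, zero_mul, Finset.sum_sub_distrib, Fintype.sum_prod_type, Finset.sum_ite_eq',
      Finset.mem_univ, ↓reduceIte, sub_self, sub_zero] at hstat ⊢
    linarith
  set a : ι → ℝ := fun i => exp (h (i, j₀))
  set b : κ → ℝ := fun j => exp (h (i₀, j) - h (i₀, j₀))
  have hP : ∀ i j, a i * M i j * b j = P (i, j) := by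
    intro i j
    rw [mul_right_comm, ← exp_add, ← hrect, exp_sub, exp_log (hP₀ _), exp_log (hM i j)]
    exact div_mul_cancel₀ _ (hM i j).ne'
  refine ⟨a, b, fun _ => exp_pos _, fun _ => exp_pos _, funext fun i => ?_, funext fun j => ?_⟩
  · exact (sum_mul_mul_eq_mul_mulVec M a b i).symm.trans
      ((Finset.sum_congr rfl fun j _ => hP i j).trans (hPK.2.1 i))
  · exact (sum_mul_mul_eq_transpose_mulVec_mul M a b j).symm.trans
      ((Finset.sum_congr rfl fun i _ => hP i j).trans (hPK.2.2 j))

theorem sum_sum_sub_mul_add_eq_zero {X Y : ι → κ → ℝ} (hrow : ∀ i, ∑ j, X i j = ∑ j, Y i j)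
    (hcol : ∀ j, ∑ i, X i j = ∑ i, Y i j) (u : ι → ℝ) (v : κ → ℝ) :
    ∑ i, ∑ j, (X i j - Y i j) * (u i + v j) = 0 := by
  simp_rw [mul_add, Finset.sum_add_distrib]
  rw [Finset.sum_comm (f := fun i j => (X i j - Y i j) * v j)]
  simp_rw [← Finset.sum_mul, Finset.sum_sub_distrib, hrow, hcol, sub_self, zero_mul,
    Finset.sum_const_zero, add_zero]

theorem exists_eq_smul_of_scaling_eq [Nonempty ι] [Nonempty κ] {M : Matrix ι κ ℝ}
    (hM : ∀ i j, 0 < M i j) {a a' : ι → ℝ} {b b' : κ → ℝ} (ha : ∀ i, 0 < a i)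
    (hb : ∀ j, 0 < b j) (ha' : ∀ i, 0 < a' i) (hb' : ∀ j, 0 < b' j)
    (hrow : a' * (M *ᵥ b') = a * (M *ᵥ b)) (hcol : (Mᵀ *ᵥ a') * b' = (Mᵀ *ᵥ a) * b) :
    ∃ c : ℝ, 0 < c ∧ a' = c • a ∧ b' = c⁻¹ • b := by
  set f := a' / a
  set g := b' / b
  have hf : ∀ i, 0 < f i := fun i => div_pos (ha' i) (ha i)
  have hg : ∀ j, 0 < g j := fun j => div_pos (hb' j) (hb j)
  have ha'f : ∀ i, a' i = f i * a i := fun i => (div_mul_cancel₀ _ (ha i).ne').symm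
  have hb'g : ∀ j, b' j = g j * b j := fun j => (div_mul_cancel₀ _ (hb j).ne').symm
  have hP : ∀ i j, 0 < a i * M i j * b j := fun i j => mul_pos (mul_pos (ha i) (hM i j)) (hb j)
  set T : ι → κ → ℝ := fun i j => a i * M i j * b j * ((f i * g j - 1) * log (f i * g j))
  -- `T` sums to `∑ (P' - P) (log f i + log g j)` for the plans `P = a M b`, `P' = a' M b'`
  have hT : ∑ i, ∑ j, T i j = 0 := by
    rw [← sum_sum_sub_mul_add_eq_zero (X := fun i j => a' i * M i j * b' j)
      (Y := fun i j => a i * M i j * b j)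
      (fun i => by simp only [sum_mul_mul_eq_mul_mulVec, ← Pi.mul_apply, hrow])
      (fun j => by simp only [sum_mul_mul_eq_transpose_mulVec_mul, ← Pi.mul_apply, hcol])
      (fun i => log (f i)) (fun j => log (g j))]
    refine Finset.sum_congr rfl fun i _ => Finset.sum_congr rfl fun j _ => ?_
    simp only [T, ha'f, hb'g, log_mul (hf i).ne' (hg j).ne']
    ring
  have hfg : ∀ i j, f i * g j = 1 := by
    intro i j
    by_contra hne
    have hT₀ : ∀ k : ι × κ, 0 ≤ T k.1 k.2 := fun k => by
      by_cases h1 : f k.1 * g k.2 = 1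
      · simp [T, h1]
      · exact mul_nonneg (hP _ _).le (sub_one_mul_log_pos (mul_pos (hf _) (hg _)) h1).le
    have hTij : 0 < T i j := mul_pos (hP i j) (sub_one_mul_log_pos (mul_pos (hf i) (hg j)) hne)
    have := Finset.single_le_sum (fun k _ => hT₀ k) (Finset.mem_univ (i, j))
    rw [Fintype.sum_prod_type' T, hT] at this
    linarith
  obtain ⟨i₀⟩ := ‹Nonempty ι›
  obtain ⟨j₀⟩ := ‹Nonempty κ›
  refine ⟨f i₀, hf i₀, funext fun i => ?_, funext fun j => ?_⟩
  · rw [Pi.smul_apply, smul_eq_mul, ha'f,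
      mul_right_cancel₀ (hg j₀).ne' ((hfg i j₀).trans (hfg i₀ j₀).symm)]
  · rw [Pi.smul_apply, smul_eq_mul, hb'g, eq_inv_of_mul_eq_one_right (hfg i₀ j)]

end Scaling

section Killing

variable {ι : Type*} (Q : Matrix ι ι ℝ) (r : ι → ℝ)

/-- The kernel `[Q | r]` on `ι ⊕ Unit`: the extra column `Sum.inr ()` is the coffin state. -/
def killedKernel : Matrix ι (ι ⊕ Unit) ℝ :=
  fromCols Q (replicateCol Unit r)

theorem killedKernel_pos (hQ : ∀ i j, 0 < Q i j) (hr : ∀ i, 0 < r i) :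
    ∀ i j, 0 < killedKernel Q r i j := by
  rintro i (j | -)
  · exact hQ i j
  · exact hr i

variable [Fintype ι]

theorem killedKernel_mulVec (b : ι ⊕ Unit → ℝ) :
    killedKernel Q r *ᵥ b = Q *ᵥ (b ∘ Sum.inl) + b (Sum.inr ()) • r := by
  ext i
  simp [killedKernel, mulVec, dotProduct, Fintype.sum_sum_type, mul_comm]

theorem killedKernel_transpose_mulVec (a : ι → ℝ) :
    (killedKernel Q r)ᵀ *ᵥ a = Sum.elim (Qᵀ *ᵥ a) fun _ => a ⬝ᵥ r := by
  ext (j | -) <;> simp [killedKernel, mulVec, dotProduct, mul_comm]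

/-- The equation `ψ₀ = c₁ / ψ̂₁` merely defines `ψ₀`, so it is left out. -/
def IsSchroedingerSolution (ρ₀ ρ₁ : ι → ℝ) (c₁ : ℝ) (φh₁ φ₀ : ι → ℝ) (ψh₁ : ℝ) : Prop :=
  φh₁ = Qᵀ *ᵥ (fun i => ρ₀ i / φ₀ i) ∧ ψh₁ = ∑ i, (ρ₀ i / φ₀ i) * r i ∧
    φ₀ = Q *ᵥ (fun i => ρ₁ i / φh₁ i) + (c₁ / ψh₁) • r

variable {Q r} {ρ₀ ρ₁ : ι → ℝ} {c₁ : ℝ}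

theorem isSchroedingerSolution_iff (hρ₀ : ∀ i, 0 < ρ₀ i) (hρ₁ : ∀ i, 0 < ρ₁ i) (hc₁ : 0 < c₁)
    {φh₁ φ₀ : ι → ℝ} {ψh₁ : ℝ} (hφh₁ : ∀ i, 0 < φh₁ i) (hφ₀ : ∀ i, 0 < φ₀ i) (hψh₁ : 0 < ψh₁) :
    IsSchroedingerSolution Q r ρ₀ ρ₁ c₁ φh₁ φ₀ ψh₁ ↔
      (ρ₀ / φ₀) * (killedKernel Q r *ᵥ Sum.elim (ρ₁ / φh₁) fun _ => c₁ / ψh₁) = ρ₀ ∧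
      ((killedKernel Q r)ᵀ *ᵥ (ρ₀ / φ₀)) * (Sum.elim (ρ₁ / φh₁) fun _ => c₁ / ψh₁) =
        Sum.elim ρ₁ fun _ => c₁ := by
  simp only [IsSchroedingerSolution, killedKernel_mulVec, killedKernel_transpose_mulVec,
    Sum.elim_comp_inl, Sum.elim_inr, funext_iff, Sum.forall, Pi.mul_apply, Pi.div_apply,
    Sum.elim_inl, Unique.forall_iff, div_mul_eq_self_iff (hρ₀ _).ne' (hφ₀ _).ne',
    mul_div_eq_self_iff (hρ₁ _).ne' (hφh₁ _).ne', mul_div_eq_self_iff hc₁.ne' hψh₁.ne']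
  constructor
  · rintro ⟨h₁, h₂, h₃⟩
    exact ⟨fun i => (h₃ i).symm, fun j => (h₁ j).symm, h₂.symm⟩
  · rintro ⟨h₃, h₁, h₂⟩
    exact ⟨fun j => (h₁ j).symm, h₂.symm, fun i => (h₃ i).symm⟩

theorem exists_isSchroedingerSolution (hQ : ∀ i j, 0 < Q i j) (hr : ∀ i, 0 < r i)
    (hρ₀ : ∀ i, 0 < ρ₀ i) (hρ₁ : ∀ i, 0 < ρ₁ i) (hc₁ : 0 < c₁) (hρ₀₁ : ∑ i, ρ₀ i = 1)
    (hρ₁₁ : ∑ i, ρ₁ i + c₁ = 1) :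
    ∃ (φh₁ φ₀ : ι → ℝ) (ψh₁ : ℝ), (∀ i, 0 < φh₁ i) ∧ (∀ i, 0 < φ₀ i) ∧ 0 < ψh₁ ∧
      IsSchroedingerSolution Q r ρ₀ ρ₁ c₁ φh₁ φ₀ ψh₁ := by
  have hq : ∀ j, 0 < Sum.elim ρ₁ (fun _ : Unit => c₁) j := by
    rintro (j | -)
    exacts [hρ₁ j, hc₁]
  obtain ⟨a, b, ha, hb, hrow, hcol⟩ := exists_pos_scaling (killedKernel_pos Q r hQ hr) hρ₀ hq
    hρ₀₁ (by simpa [Fintype.sum_sum_type] using hρ₁₁)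
  have hφh₁ : ∀ i, 0 < (ρ₁ / (b ∘ Sum.inl)) i := fun i => div_pos (hρ₁ i) (hb _)
  have hφ₀ : ∀ i, 0 < (ρ₀ / a) i := fun i => div_pos (hρ₀ i) (ha i)
  have hψh₁ : 0 < c₁ / b (Sum.inr ()) := div_pos hc₁ (hb _)
  refine ⟨_, _, _, hφh₁, hφ₀, hψh₁, (isSchroedingerSolution_iff hρ₀ hρ₁ hc₁ hφh₁ hφ₀ hψh₁).2 ?_⟩
  have ha' : ρ₀ / (ρ₀ / a) = a := funext fun i => div_div_cancel₀ (hρ₀ i).ne'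
  have hb' : (Sum.elim (ρ₁ / (ρ₁ / (b ∘ Sum.inl))) fun _ => c₁ / (c₁ / b (Sum.inr ()))) = b := by
    funext j
    rcases j with j | ⟨⟩
    exacts [div_div_cancel₀ (hρ₁ j).ne', div_div_cancel₀ hc₁.ne']
  rw [ha', hb']
  exact ⟨hrow, hcol⟩

theorem IsSchroedingerSolution.exists_eq_smul [Nonempty ι] (hQ : ∀ i j, 0 < Q i j)
    (hr : ∀ i, 0 < r i) (hρ₀ : ∀ i, 0 < ρ₀ i) (hρ₁ : ∀ i, 0 < ρ₁ i) (hc₁ : 0 < c₁)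
    {φh₁ φ₀ φh₁' φ₀' : ι → ℝ} {ψh₁ ψh₁' : ℝ} (hφh₁ : ∀ i, 0 < φh₁ i) (hφ₀ : ∀ i, 0 < φ₀ i)
    (hψh₁ : 0 < ψh₁) (hφh₁' : ∀ i, 0 < φh₁' i) (hφ₀' : ∀ i, 0 < φ₀' i) (hψh₁' : 0 < ψh₁')
    (h : IsSchroedingerSolution Q r ρ₀ ρ₁ c₁ φh₁ φ₀ ψh₁)
    (h' : IsSchroedingerSolution Q r ρ₀ ρ₁ c₁ φh₁' φ₀' ψh₁') :
    ∃ c : ℝ, 0 < c ∧ φh₁' = c • φh₁ ∧ ψh₁' = c * ψh₁ ∧ φ₀' = c⁻¹ • φ₀ := by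
  obtain ⟨hrow, hcol⟩ := (isSchroedingerSolution_iff hρ₀ hρ₁ hc₁ hφh₁ hφ₀ hψh₁).1 h
  obtain ⟨hrow', hcol'⟩ := (isSchroedingerSolution_iff hρ₀ hρ₁ hc₁ hφh₁' hφ₀' hψh₁').1 h'
  have hbpos : ∀ φh₁ : ι → ℝ, ∀ ψh₁, (∀ i, 0 < φh₁ i) → 0 < ψh₁ →
      ∀ j, 0 < (Sum.elim (ρ₁ / φh₁) fun _ : Unit => c₁ / ψh₁) j := by
    rintro φh₁ ψh₁ hφh₁ hψh₁ (j | -)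
    exacts [div_pos (hρ₁ j) (hφh₁ j), div_pos hc₁ hψh₁]
  obtain ⟨c, hc, ha, hb⟩ := exists_eq_smul_of_scaling_eq (killedKernel_pos Q r hQ hr)
    (fun i => div_pos (hρ₀ i) (hφ₀ i)) (hbpos φh₁ ψh₁ hφh₁ hψh₁)
    (fun i => div_pos (hρ₀ i) (hφ₀' i)) (hbpos φh₁' ψh₁' hφh₁' hψh₁')
    (hrow'.trans hrow.symm) (hcol'.trans hcol.symm)
  refine ⟨c, hc, funext fun i => ?_, ?_, funext fun i => ?_⟩
  · have := congrFun hb (Sum.inl i)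
    simp only [Sum.elim_inl, Pi.smul_apply, Pi.div_apply, smul_eq_mul] at this
    simpa using eq_inv_mul_of_div_eq_mul_div (hρ₁ i).ne' (hφh₁' i).ne' this
  · have := congrFun hb (Sum.inr ())
    simp only [Sum.elim_inr, Pi.smul_apply, smul_eq_mul] at this
    simpa using eq_inv_mul_of_div_eq_mul_div hc₁.ne' hψh₁'.ne' this
  · have := congrFun ha i
    simp only [Pi.smul_apply, smul_eq_mul] at this
    exact eq_inv_mul_of_div_eq_mul_div (hρ₀ i).ne' (hφ₀' i).ne' this

end Killing

/-- existence and uniqueness (up to a common positive scaling)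
of solutions of the discrete generalized Schrödinger system with killing. -/
theorem discrete_schroedinger_system_with_killing
    {n : ℕ} (hn : 0 < n) (Q : Matrix (Fin n) (Fin n) ℝ)
    (hQ : ∀ i j, 0 < Q i j)
    (r : Fin n → ℝ) (hr : ∀ i, 0 < r i)
    (ρ₀ ρ₁ : Fin n → ℝ) (hρ₀ : ∀ i, 0 < ρ₀ i) (hρ₁ : ∀ i, 0 < ρ₁ i)
    (hρ₀sum : ∑ i, ρ₀ i = 1) (hρ₁sum : ∑ i, ρ₁ i < 1) :
    ∃ (φh₁ φ₀ : Fin n → ℝ) (ψh₁ ψ₀ : ℝ),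
      (∀ i, 0 < φh₁ i) ∧ (∀ i, 0 < φ₀ i) ∧ 0 < ψh₁ ∧ 0 < ψ₀ ∧
      -- the four Schrödinger equations
      (φh₁ = Qᵀ.mulVec (fun i => ρ₀ i / φ₀ i)) ∧
      (ψh₁ = ∑ i, (ρ₀ i / φ₀ i) * r i) ∧
      (φ₀ = Q.mulVec (fun i => ρ₁ i / φh₁ i)
              + ((1 - ∑ i, ρ₁ i) / ψh₁) • r) ∧
      (ψ₀ = (1 - ∑ i, ρ₁ i) / ψh₁) ∧
      -- uniqueness up to a common positive scaling
      (∀ (φh₁' φ₀' : Fin n → ℝ) (ψh₁' ψ₀' : ℝ),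
        (∀ i, 0 < φh₁' i) → (∀ i, 0 < φ₀' i) → 0 < ψh₁' → 0 < ψ₀' →
        (φh₁' = Qᵀ.mulVec (fun i => ρ₀ i / φ₀' i)) →
        (ψh₁' = ∑ i, (ρ₀ i / φ₀' i) * r i) →
        (φ₀' = Q.mulVec (fun i => ρ₁ i / φh₁' i)
                 + ((1 - ∑ i, ρ₁ i) / ψh₁') • r) →
        (ψ₀' = (1 - ∑ i, ρ₁ i) / ψh₁') →
        ∃ c : ℝ, 0 < c ∧ φh₁' = c • φh₁ ∧ ψh₁' = c * ψh₁ ∧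
          φ₀' = c⁻¹ • φ₀ ∧ ψ₀' = c⁻¹ * ψ₀) := by
  have : Nonempty (Fin n) := Fin.pos_iff_nonempty.mp hn
  have hc₁ : 0 < 1 - ∑ i, ρ₁ i := sub_pos.2 hρ₁sum
  obtain ⟨φh₁, φ₀, ψh₁, hφh₁, hφ₀, hψh₁, hsol⟩ :=
    exists_isSchroedingerSolution hQ hr hρ₀ hρ₁ hc₁ hρ₀sum (add_sub_cancel _ _)
  refine ⟨φh₁, φ₀, ψh₁, _, hφh₁, hφ₀, hψh₁, div_pos hc₁ hψh₁, hsol.1, hsol.2.1, hsol.2.2, rfl, ?_⟩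
  rintro φh₁' φ₀' ψh₁' _ hφh₁' hφ₀' hψh₁' - h₁ h₂ h₃ rfl
  obtain ⟨c, hc, hφh, hψh, hφ⟩ :=
    hsol.exists_eq_smul hQ hr hρ₀ hρ₁ hc₁ hφh₁ hφ₀ hψh₁ hφh₁' hφ₀' hψh₁' ⟨h₁, h₂, h₃⟩
  refine ⟨c, hc, hφh, hψh, hφ, ?_⟩
  rw [hψh]
  ring
end

section
/- Product of forward and backward Schrödinger factors with killing solves the controlled Fokker–Planck equation: if φ̂ satisfies ∂ₜφ̂ = −∇·(bφ̂) − Vφ̂ + (1/2)Σᵢⱼ ∂²(aᵢⱼφ̂)/∂xᵢ∂xⱼ and φ satisfies ∂ₜφ = −b·∇φ + Vφ − (1/2)Σᵢⱼ aᵢⱼ ∂²φ/∂xᵢ∂xⱼ − Vψ with ψ a positive constant, then P(t,x) := φ(t,x)·φ̂(t,x) satisfies ∂ₜP + ∇·((b + a∇log φ)P) = (1/2)Σᵢⱼ ∂²(aᵢⱼP)/∂xᵢ∂xⱼ − (ψ/φ)·V·P. -/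
open Real

/-- Partial derivative in the direction of the `i`-th coordinate. -/
noncomputable def pd {n : ℕ} (i : Fin n) (f : (Fin n → ℝ) → ℝ)
    (x : Fin n → ℝ) : ℝ :=
  fderiv ℝ f x (Pi.single i 1)


lemma pd_contDiff {n : ℕ} (i : Fin n) {f : (Fin n → ℝ) → ℝ}
    (hf : ContDiff ℝ (⊤ : ℕ∞) f) : ContDiff ℝ (⊤ : ℕ∞) (fun y => pd i f y) :=
  (hf.fderiv_right (le_of_eq (by simp))).clm_apply contDiff_const

lemma pd_mul {n : ℕ} (i : Fin n) {f g : (Fin n → ℝ) → ℝ} {x : Fin n → ℝ}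
    (hf : DifferentiableAt ℝ f x) (hg : DifferentiableAt ℝ g x) :
    pd i (fun y => f y * g y) x = pd i f x * g x + f x * pd i g x := by
  unfold pd
  rw [fderiv_fun_mul hf hg]
  simp [smul_eq_mul]
  ring

lemma pd_add {n : ℕ} (i : Fin n) {f g : (Fin n → ℝ) → ℝ} {x : Fin n → ℝ}
    (hf : DifferentiableAt ℝ f x) (hg : DifferentiableAt ℝ g x) :
    pd i (fun y => f y + g y) x = pd i f x + pd i g x := by
  unfold pd
  rw [fderiv_fun_add hf hg]
  simp

lemma pd_sum {n m : ℕ} (i : Fin n) {f : Fin m → (Fin n → ℝ) → ℝ} {x : Fin n → ℝ}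
    (hf : ∀ j, DifferentiableAt ℝ (f j) x) :
    pd i (fun y => ∑ j, f j y) x = ∑ j, pd i (f j) x := by
  unfold pd
  rw [fderiv_fun_sum (fun j _ => hf j)]
  simp

lemma pd_log {n : ℕ} (j : Fin n) {f : (Fin n → ℝ) → ℝ} {x : Fin n → ℝ}
    (hf : DifferentiableAt ℝ f x) (hx : f x ≠ 0) :
    pd j (fun z => Real.log (f z)) x = pd j f x / f x := by
  unfold pd
  rw [(hf.hasFDerivAt.log hx).fderiv]
  simp [smul_eq_mul]
  ring

/-- if `φ̂` solves the forward equation with killing and `φ`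
solves the backward equation (with constant `ψ > 0`), then `P = φ·φ̂` solves
the controlled Fokker–Planck equation with drift `b + a∇log φ` and killing
rate `(ψ/φ)V`. -/
theorem product_solves_controlled_fokker_planck
    {n : ℕ}
    (b : ℝ → (Fin n → ℝ) → Fin n → ℝ)
    (a : ℝ → (Fin n → ℝ) → Fin n → Fin n → ℝ)
    (V : ℝ → (Fin n → ℝ) → ℝ)
    (φ φh : ℝ → (Fin n → ℝ) → ℝ) (ψ : ℝ)
    (hψ : 0 < ψ) (hφ : ∀ t x, 0 < φ t x)
    (hVnonneg : ∀ t x, 0 ≤ V t x)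
    (hasymm : ∀ t x i j, a t x i j = a t x j i)
    (hφsmooth : ContDiff ℝ (⊤ : ℕ∞) (fun p : ℝ × (Fin n → ℝ) => φ p.1 p.2))
    (hφhsmooth : ContDiff ℝ (⊤ : ℕ∞) (fun p : ℝ × (Fin n → ℝ) => φh p.1 p.2))
    (hbsmooth : ∀ i, ContDiff ℝ (⊤ : ℕ∞) (fun p : ℝ × (Fin n → ℝ) => b p.1 p.2 i))
    (hasmooth : ∀ i j, ContDiff ℝ (⊤ : ℕ∞) (fun p : ℝ × (Fin n → ℝ) => a p.1 p.2 i j))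
    (hVsmooth : ContDiff ℝ (⊤ : ℕ∞) (fun p : ℝ × (Fin n → ℝ) => V p.1 p.2))
    -- forward equation: ∂ₜφ̂ = −∇·(bφ̂) − Vφ̂ + ½ Σ ∂²ᵢⱼ(aᵢⱼφ̂)
    (hforward : ∀ t x, deriv (fun s => φh s x) t
        = -(∑ i, pd i (fun y => b t y i * φh t y) x)
          - V t x * φh t x
          + (1 / 2) * ∑ i, ∑ j,
              pd i (fun y => pd j (fun z => a t z i j * φh t z) y) x)
    -- backward equation: ∂ₜφ = −b·∇φ + Vφ − ½ Σ aᵢⱼ ∂²ᵢⱼφ − Vψ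
    (hbackward : ∀ t x, deriv (fun s => φ s x) t
        = -(∑ i, b t x i * pd i (φ t) x)
          + V t x * φ t x
          - (1 / 2) * ∑ i, ∑ j, a t x i j * pd i (fun y => pd j (φ t) y) x
          - V t x * ψ) :
    ∀ (t : ℝ) (x : Fin n → ℝ),
      deriv (fun s => φ s x * φh s x) t
        + ∑ i, pd i (fun y =>
            (b t y i + ∑ j, a t y i j * pd j (fun z => Real.log (φ t z)) y)
              * (φ t y * φh t y)) x
      = (1 / 2) * ∑ i, ∑ j,
          pd i (fun y => pd j (fun z => a t z i j * (φ t z * φh t z)) y) x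
        - (ψ / φ t x) * V t x * (φ t x * φh t x) := by
  intro t x
  have hst : ContDiff ℝ (⊤ : ℕ∞) (fun y : Fin n → ℝ => ((t, y) : ℝ × (Fin n → ℝ))) :=
    contDiff_const.prodMk contDiff_id
  have cφ : ContDiff ℝ (⊤ : ℕ∞) (φ t) := hφsmooth.comp hst
  have cφh : ContDiff ℝ (⊤ : ℕ∞) (φh t) := hφhsmooth.comp hst
  have cb : ∀ i, ContDiff ℝ (⊤ : ℕ∞) (fun y => b t y i) := fun i => (hbsmooth i).comp hst
  have ca : ∀ i j, ContDiff ℝ (⊤ : ℕ∞) (fun y => a t y i j) := fun i j => (hasmooth i j).comp hst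
  have cpφ : ∀ j, ContDiff ℝ (⊤ : ℕ∞) (fun y => pd j (φ t) y) := fun j => pd_contDiff j cφ
  have cpφh : ∀ j, ContDiff ℝ (⊤ : ℕ∞) (fun y => pd j (φh t) y) := fun j => pd_contDiff j cφh
  have cpa : ∀ i j k, ContDiff ℝ (⊤ : ℕ∞) (fun y => pd k (fun z => a t z i j) y) :=
    fun i j k => pd_contDiff k (ca i j)
  have dd : ∀ {f : (Fin n → ℝ) → ℝ}, ContDiff ℝ (⊤ : ℕ∞) f → ∀ y, DifferentiableAt ℝ f y :=
    fun h y => h.differentiable (by simp) y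
  -- time derivative of the product
  have dts : ContDiff ℝ (⊤ : ℕ∞) (fun s : ℝ => ((s, x) : ℝ × (Fin n → ℝ))) :=
    contDiff_id.prodMk contDiff_const
  have hdφ : DifferentiableAt ℝ (fun s => φ s x) t :=
    ((hφsmooth.comp dts).differentiable (by simp)) t
  have hdφh : DifferentiableAt ℝ (fun s => φh s x) t :=
    ((hφhsmooth.comp dts).differentiable (by simp)) t
  have hdt : deriv (fun s => φ s x * φh s x) t
      = deriv (fun s => φ s x) t * φh t x + φ t x * deriv (fun s => φh s x) t := by
    rw [deriv_fun_mul hdφ hdφh]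
  -- expansion of the forward b-term
  have hfb : ∑ i, pd i (fun y => b t y i * φh t y) x
      = (∑ i, pd i (fun y => b t y i) x) * φh t x
        + ∑ i, b t x i * pd i (φh t) x := by
    have h1 : ∀ i, pd i (fun y => b t y i * φh t y) x
        = pd i (fun y => b t y i) x * φh t x + b t x i * pd i (φh t) x :=
      fun i => pd_mul i (dd (cb i) x) (dd cφh x)
    rw [Finset.sum_congr rfl fun i _ => h1 i]
    rw [Finset.sum_add_distrib, ← Finset.sum_mul]
  -- expansion of the forward a-term
  have hfa : ∑ i, ∑ j, pd i (fun y => pd j (fun z => a t z i j * φh t z) y) x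
      = (∑ i, ∑ j, pd i (fun y => pd j (fun z => a t z i j) y) x) * φh t x
        + ∑ i, (∑ j, pd j (fun y => a t y i j) x) * pd i (φh t) x
        + ∑ i, ∑ j, pd i (fun y => a t y i j) x * pd j (φh t) x
        + ∑ i, ∑ j, a t x i j * pd i (fun y => pd j (φh t) y) x := by
    have h2 : ∀ i j, pd i (fun y => pd j (fun z => a t z i j * φh t z) y) x
        = pd i (fun y => pd j (fun z => a t z i j) y) x * φh t x
          + pd j (fun y => a t y i j) x * pd i (φh t) x
          + pd i (fun y => a t y i j) x * pd j (φh t) x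
          + a t x i j * pd i (fun y => pd j (φh t) y) x := by
      intro i j
      have e : (fun y => pd j (fun z => a t z i j * φh t z) y)
          = fun y => pd j (fun z => a t z i j) y * φh t y + a t y i j * pd j (φh t) y :=
        funext fun y => pd_mul j (dd (ca i j) y) (dd cφh y)
      rw [e, pd_add i (dd ((cpa i j j).mul cφh) x) (dd ((ca i j).mul (cpφh j)) x),
        pd_mul i (dd (cpa i j j) x) (dd cφh x),
        pd_mul i (dd (ca i j) x) (dd (cpφh j) x)]
      ring
    rw [Finset.sum_congr rfl fun i _ => Finset.sum_congr rfl fun j _ => h2 i j]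
    simp only [Finset.sum_add_distrib, ← Finset.sum_mul]
  -- expansion of the drift-divergence term
  have hd : ∀ i, pd i (fun y =>
        (b t y i + ∑ j, a t y i j * pd j (fun z => Real.log (φ t z)) y)
          * (φ t y * φh t y)) x
      = pd i (fun y => b t y i) x * φ t x * φh t x
        + b t x i * pd i (φ t) x * φh t x
        + b t x i * pd i (φh t) x * φ t x
        + ∑ j, (pd i (fun y => a t y i j) x * pd j (φ t) x * φh t x
            + a t x i j * pd i (fun y => pd j (φ t) y) x * φh t x
            + a t x i j * pd j (φ t) x * pd i (φh t) x) := by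
    intro i
    have e1 : (fun y =>
          (b t y i + ∑ j, a t y i j * pd j (fun z => Real.log (φ t z)) y)
            * (φ t y * φh t y))
        = fun y => b t y i * (φ t y * φh t y)
            + ∑ j, a t y i j * (pd j (φ t) y * φh t y) := by
      funext y
      have hl : ∀ j : Fin n, pd j (fun z => Real.log (φ t z)) y = pd j (φ t) y / φ t y :=
        fun j => pd_log j (dd cφ y) (ne_of_gt (hφ t y))
      simp only [hl]
      rw [add_mul, Finset.sum_mul]
      congr 1
      refine Finset.sum_congr rfl fun j _ => ?_
      have h0 : φ t y ≠ 0 := ne_of_gt (hφ t y)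
      field_simp
    rw [e1, pd_add i (dd ((cb i).mul (cφ.mul cφh)) x)
        (dd (ContDiff.sum fun j _ => (ca i j).mul ((cpφ j).mul cφh)) x),
      pd_mul i (dd (cb i) x) (dd (cφ.mul cφh) x),
      pd_mul i (dd cφ x) (dd cφh x),
      pd_sum i (fun j => dd ((ca i j).mul ((cpφ j).mul cφh)) x)]
    have hj : ∀ j : Fin n, pd i (fun y => a t y i j * (pd j (φ t) y * φh t y)) x
        = pd i (fun y => a t y i j) x * pd j (φ t) x * φh t x
          + a t x i j * pd i (fun y => pd j (φ t) y) x * φh t x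
          + a t x i j * pd j (φ t) x * pd i (φh t) x := by
      intro j
      rw [pd_mul i (dd (ca i j) x) (dd ((cpφ j).mul cφh) x),
        pd_mul i (dd (cpφ j) x) (dd cφh x)]
      ring
    rw [Finset.sum_congr rfl fun j _ => hj j]
    ring
  have hdsum : ∑ i, pd i (fun y =>
        (b t y i + ∑ j, a t y i j * pd j (fun z => Real.log (φ t z)) y)
          * (φ t y * φh t y)) x
      = (∑ i, pd i (fun y => b t y i) x) * φ t x * φh t x
        + (∑ i, b t x i * pd i (φ t) x) * φh t x
        + (∑ i, b t x i * pd i (φh t) x) * φ t x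
        + (∑ i, ∑ j, pd i (fun y => a t y i j) x * pd j (φ t) x) * φh t x
        + (∑ i, ∑ j, a t x i j * pd i (fun y => pd j (φ t) y) x) * φh t x
        + ∑ i, (∑ j, a t x i j * pd j (φ t) x) * pd i (φh t) x := by
    rw [Finset.sum_congr rfl fun i _ => hd i]
    simp only [Finset.sum_add_distrib, ← Finset.sum_mul]
    ring
  -- expansion of the right-hand second-order term
  have hRj : ∀ i j, pd i (fun y => pd j (fun z => a t z i j * (φ t z * φh t z)) y) x
      = pd i (fun y => pd j (fun z => a t z i j) y) x * φ t x * φh t x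
        + pd j (fun y => a t y i j) x * pd i (φ t) x * φh t x
        + pd j (fun y => a t y i j) x * pd i (φh t) x * φ t x
        + pd i (fun y => a t y i j) x * pd j (φ t) x * φh t x
        + a t x i j * pd i (fun y => pd j (φ t) y) x * φh t x
        + a t x i j * pd j (φ t) x * pd i (φh t) x
        + pd i (fun y => a t y i j) x * pd j (φh t) x * φ t x
        + a t x i j * pd i (φ t) x * pd j (φh t) x
        + a t x i j * pd i (fun y => pd j (φh t) y) x * φ t x := by
    intro i j
    have e : (fun y => pd j (fun z => a t z i j * (φ t z * φh t z)) y)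
        = fun y => pd j (fun z => a t z i j) y * (φ t y * φh t y)
            + a t y i j * (pd j (φ t) y * φh t y + φ t y * pd j (φh t) y) := by
      funext y
      rw [pd_mul j (dd (ca i j) y) (dd (cφ.mul cφh) y),
        pd_mul j (dd cφ y) (dd cφh y)]
    rw [e, pd_add i (dd ((cpa i j j).mul (cφ.mul cφh)) x)
        (dd ((ca i j).mul (((cpφ j).mul cφh).add (cφ.mul (cpφh j)))) x),
      pd_mul i (dd (cpa i j j) x) (dd (cφ.mul cφh) x),
      pd_mul i (dd cφ x) (dd cφh x),
      pd_mul i (dd (ca i j) x) (dd (((cpφ j).mul cφh).add (cφ.mul (cpφh j))) x),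
      pd_add i (dd ((cpφ j).mul cφh) x) (dd (cφ.mul (cpφh j)) x),
      pd_mul i (dd (cpφ j) x) (dd cφh x),
      pd_mul i (dd cφ x) (dd (cpφh j) x)]
    ring
  have hRsum : ∑ i, ∑ j, pd i (fun y => pd j (fun z => a t z i j * (φ t z * φh t z)) y) x
      = (∑ i, ∑ j, pd i (fun y => pd j (fun z => a t z i j) y) x) * φ t x * φh t x
        + (∑ i, (∑ j, pd j (fun y => a t y i j) x) * pd i (φ t) x) * φh t x
        + (∑ i, (∑ j, pd j (fun y => a t y i j) x) * pd i (φh t) x) * φ t x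
        + (∑ i, ∑ j, pd i (fun y => a t y i j) x * pd j (φ t) x) * φh t x
        + (∑ i, ∑ j, a t x i j * pd i (fun y => pd j (φ t) y) x) * φh t x
        + ∑ i, (∑ j, a t x i j * pd j (φ t) x) * pd i (φh t) x
        + (∑ i, ∑ j, pd i (fun y => a t y i j) x * pd j (φh t) x) * φ t x
        + ∑ i, ∑ j, a t x i j * pd i (φ t) x * pd j (φh t) x
        + (∑ i, ∑ j, a t x i j * pd i (fun y => pd j (φh t) y) x) * φ t x := by
    rw [Finset.sum_congr rfl fun i _ => Finset.sum_congr rfl fun j _ => hRj i j]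
    simp only [Finset.sum_add_distrib, ← Finset.sum_mul]
  -- symmetry lemmas
  have hsym2 : ∑ i, (∑ j, pd j (fun y => a t y i j) x) * pd i (φ t) x
      = ∑ i, ∑ j, pd i (fun y => a t y i j) x * pd j (φ t) x := by
    calc ∑ i, (∑ j, pd j (fun y => a t y i j) x) * pd i (φ t) x
        = ∑ i, ∑ j, pd j (fun y => a t y i j) x * pd i (φ t) x := by
          simp only [Finset.sum_mul]
      _ = ∑ j, ∑ i, pd j (fun y => a t y i j) x * pd i (φ t) x := Finset.sum_comm
      _ = ∑ i, ∑ j, pd i (fun y => a t y i j) x * pd j (φ t) x := by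
          refine Finset.sum_congr rfl fun i _ => Finset.sum_congr rfl fun j _ => ?_
          congr 2
          funext y
          exact hasymm t y j i
  have hsym5 : ∑ i, (∑ j, a t x i j * pd j (φ t) x) * pd i (φh t) x
      = ∑ i, ∑ j, a t x i j * pd i (φ t) x * pd j (φh t) x := by
    calc ∑ i, (∑ j, a t x i j * pd j (φ t) x) * pd i (φh t) x
        = ∑ i, ∑ j, a t x i j * pd j (φ t) x * pd i (φh t) x := by
          simp only [Finset.sum_mul]
      _ = ∑ j, ∑ i, a t x i j * pd j (φ t) x * pd i (φh t) x := Finset.sum_comm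
      _ = ∑ i, ∑ j, a t x i j * pd i (φ t) x * pd j (φh t) x := by
          refine Finset.sum_congr rfl fun i _ => Finset.sum_congr rfl fun j _ => ?_
          rw [hasymm t x j i]
  have hkill : ψ / φ t x * V t x * (φ t x * φh t x) = ψ * V t x * φh t x := by
    have h0 : φ t x ≠ 0 := ne_of_gt (hφ t x)
    field_simp
  rw [hdt, hbackward t x, hforward t x, hfb, hfa, hdsum, hRsum]
  linear_combination (-(φh t x) / 2) * hsym2 + (1 / 2) * hsym5 + hkill
end

section
/- In the discrete static Schrödinger bridge: let R₀₁ be an n×m matrix with strictly positive entries, ρ₀ ∈ ℝⁿ and ρ₁ ∈ ℝᵐ strictly positive vectors with Σᵢρ₀ᵢ = Σⱼρ₁ⱼ = 1. If there exist strictly positive vectors f ∈ ℝⁿ, g ∈ ℝᵐ such that the matrix πᵢⱼ = fᵢ·R₀₁(i,j)·gⱼ has row sums ρ₀ and column sums ρ₁, then π is the unique minimizer of H(π | R₀₁) = Σᵢⱼ πᵢⱼ log(πᵢⱼ/R₀₁(i,j)) over the set of nonnegative matrices with row sums ρ₀ and column sums ρ₁. -/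
/-!
Since `log (πᵢⱼ / Rᵢⱼ) = log fᵢ + log gⱼ`, integrating it against any `π'` gives a value that
depends only on the marginals of `π'`. Hence every `π'` in the transportation polytope satisfies
`H(π' | R) = H(π' | π) + H(π | R)`, and `H(π' | π) = Σᵢⱼ πᵢⱼ klFun (π'ᵢⱼ / πᵢⱼ)` because `π'` and `π`
have the same total mass. As `klFun ≥ 0` vanishes only at `1`, `H(π' | π) ≥ 0` with equality
only for `π' = π`.
-/

open Finset InformationTheory

/-- Discrete relative entropy `H(π | R) = Σᵢⱼ πᵢⱼ log(πᵢⱼ/Rᵢⱼ)`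
(in Lean, `0 * log 0 = 0` automatically). -/
noncomputable def discreteRelEnt {n m : ℕ}
    (π R : Matrix (Fin n) (Fin m) ℝ) : ℝ :=
  ∑ i, ∑ j, π i j * Real.log (π i j / R i j)

lemma mul_log_div_eq_sub_add_mul_klFun (a : ℝ) {b : ℝ} (hb : 0 < b) :
    a * Real.log (a / b) = a - b + b * klFun (a / b) := by
  rw [klFun_apply]
  field_simp
  ring

section

variable {n m : ℕ}

lemma discreteRelEnt_eq_sum_mul_klFun {π' π : Matrix (Fin n) (Fin m) ℝ} (hπ : ∀ i j, 0 < π i j)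
    (hmass : ∑ i, ∑ j, π' i j = ∑ i, ∑ j, π i j) :
    discreteRelEnt π' π = ∑ i, ∑ j, π i j * klFun (π' i j / π i j) := by
  have hterm i j := mul_log_div_eq_sub_add_mul_klFun (π' i j) (hπ i j)
  simp only [discreteRelEnt, hterm, sum_add_distrib, sum_sub_distrib, hmass, sub_self, zero_add]

lemma discreteRelEnt_nonneg {π' π : Matrix (Fin n) (Fin m) ℝ} (hπ' : ∀ i j, 0 ≤ π' i j)
    (hπ : ∀ i j, 0 < π i j) (hmass : ∑ i, ∑ j, π' i j = ∑ i, ∑ j, π i j) :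
    0 ≤ discreteRelEnt π' π := by
  rw [discreteRelEnt_eq_sum_mul_klFun hπ hmass]
  exact sum_nonneg fun i _ ↦ sum_nonneg fun j _ ↦
    mul_nonneg (hπ i j).le (klFun_nonneg (div_nonneg (hπ' i j) (hπ i j).le))

lemma eq_of_discreteRelEnt_eq_zero {π' π : Matrix (Fin n) (Fin m) ℝ} (hπ' : ∀ i j, 0 ≤ π' i j)
    (hπ : ∀ i j, 0 < π i j) (hmass : ∑ i, ∑ j, π' i j = ∑ i, ∑ j, π i j)
    (h : discreteRelEnt π' π = 0) : π' = π := by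
  have hkl_nonneg i j : 0 ≤ klFun (π' i j / π i j) :=
    klFun_nonneg (div_nonneg (hπ' i j) (hπ i j).le)
  rw [discreteRelEnt_eq_sum_mul_klFun hπ hmass, sum_eq_zero_iff_of_nonneg fun i _ ↦
    sum_nonneg fun j _ ↦ mul_nonneg (hπ i j).le (hkl_nonneg i j)] at h
  ext i j
  have hij := (sum_eq_zero_iff_of_nonneg fun j _ ↦ mul_nonneg (hπ i j).le (hkl_nonneg i j)).1
    (h i (mem_univ i)) j (mem_univ j)
  rw [mul_eq_zero, or_iff_right (hπ i j).ne', klFun_eq_zero_iff (div_nonneg (hπ' i j) (hπ i j).le),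
    div_eq_one_iff_eq (hπ i j).ne'] at hij
  exact hij

lemma discreteRelEnt_eq_of_scaling {R π : Matrix (Fin n) (Fin m) ℝ} {f : Fin n → ℝ}
    {g : Fin m → ℝ} (hR : ∀ i j, 0 < R i j) (hf : ∀ i, 0 < f i) (hg : ∀ j, 0 < g j)
    (hπ : ∀ i j, π i j = f i * R i j * g j) (π' : Matrix (Fin n) (Fin m) ℝ) :
    discreteRelEnt π' R = discreteRelEnt π' π + ∑ i, (∑ j, π' i j) * Real.log (f i)
      + ∑ j, (∑ i, π' i j) * Real.log (g j) := by
  have hterm i j : π' i j * Real.log (π' i j / R i j) = π' i j * Real.log (π' i j / π i j)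
      + π' i j * Real.log (f i) + π' i j * Real.log (g j) := by
    rcases eq_or_ne (π' i j) 0 with h | h
    · simp [h]
    have hfR := mul_pos (hf i) (hR i j)
    rw [hπ, Real.log_div h (hR i j).ne', Real.log_div h (mul_pos hfR (hg j)).ne',
      Real.log_mul hfR.ne' (hg j).ne', Real.log_mul (hf i).ne' (hR i j).ne']
    ring
  simp only [discreteRelEnt, hterm, sum_add_distrib, sum_mul]
  rw [sum_comm (f := fun i j ↦ π' i j * Real.log (g j))]

@[simp]
lemma discreteRelEnt_self (π : Matrix (Fin n) (Fin m) ℝ) : discreteRelEnt π π = 0 := by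
  simp [discreteRelEnt]

lemma discreteRelEnt_eq_add_of_scaling {R π π' : Matrix (Fin n) (Fin m) ℝ} {f : Fin n → ℝ}
    {g : Fin m → ℝ} (hR : ∀ i j, 0 < R i j) (hf : ∀ i, 0 < f i) (hg : ∀ j, 0 < g j)
    (hπ : ∀ i j, π i j = f i * R i j * g j) (hrow : ∀ i, ∑ j, π' i j = ∑ j, π i j)
    (hcol : ∀ j, ∑ i, π' i j = ∑ i, π i j) :
    discreteRelEnt π' R = discreteRelEnt π' π + discreteRelEnt π R := by
  rw [discreteRelEnt_eq_of_scaling hR hf hg hπ π', discreteRelEnt_eq_of_scaling hR hf hg hπ π,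
    discreteRelEnt_self]
  simp only [hrow, hcol]
  ring

end

theorem discrete_static_schroedinger_bridge_general
    {n m : ℕ} (R₀₁ : Matrix (Fin n) (Fin m) ℝ)
    (hR : ∀ i j, 0 < R₀₁ i j)
    (ρ₀ : Fin n → ℝ) (ρ₁ : Fin m → ℝ)
    (f : Fin n → ℝ) (g : Fin m → ℝ)
    (hf : ∀ i, 0 < f i) (hg : ∀ j, 0 < g j)
    (π : Matrix (Fin n) (Fin m) ℝ)
    (hπ : ∀ i j, π i j = f i * R₀₁ i j * g j)
    (hrow : ∀ i, ∑ j, π i j = ρ₀ i)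
    (hcol : ∀ j, ∑ i, π i j = ρ₁ j) :
    (∀ π' : Matrix (Fin n) (Fin m) ℝ,
        (∀ i j, 0 ≤ π' i j) →
        (∀ i, ∑ j, π' i j = ρ₀ i) → (∀ j, ∑ i, π' i j = ρ₁ j) →
        discreteRelEnt π R₀₁ ≤ discreteRelEnt π' R₀₁) ∧
    (∀ π' : Matrix (Fin n) (Fin m) ℝ,
        (∀ i j, 0 ≤ π' i j) →
        (∀ i, ∑ j, π' i j = ρ₀ i) → (∀ j, ∑ i, π' i j = ρ₁ j) →
        discreteRelEnt π' R₀₁ = discreteRelEnt π R₀₁ → π' = π) := by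
  have hπ_pos i j : 0 < π i j := hπ i j ▸ mul_pos (mul_pos (hf i) (hR i j)) (hg j)
  have hsplit π' (hrow' : ∀ i, ∑ j, π' i j = ρ₀ i) (hcol' : ∀ j, ∑ i, π' i j = ρ₁ j) :
      discreteRelEnt π' R₀₁ = discreteRelEnt π' π + discreteRelEnt π R₀₁ :=
    discreteRelEnt_eq_add_of_scaling hR hf hg hπ (fun i ↦ (hrow' i).trans (hrow i).symm)
      (fun j ↦ (hcol' j).trans (hcol j).symm)
  have hmass (π' : Matrix (Fin n) (Fin m) ℝ) (hrow' : ∀ i, ∑ j, π' i j = ρ₀ i) :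
      ∑ i, ∑ j, π' i j = ∑ i, ∑ j, π i j := by
    simp only [hrow', hrow]
  refine ⟨fun π' hπ' hrow' hcol' ↦ ?_, fun π' hπ' hrow' hcol' heq ↦ ?_⟩
  · linarith [hsplit π' hrow' hcol', discreteRelEnt_nonneg hπ' hπ_pos (hmass π' hrow')]
  · exact eq_of_discreteRelEnt_eq_zero hπ' hπ_pos (hmass π' hrow')
      (by linarith [hsplit π' hrow' hcol'])

/-- discrete static Schrödinger bridge. If
`πᵢⱼ = fᵢ·R₀₁(i,j)·gⱼ` (with `f, g` strictly positive) has row sums `ρ₀` and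
column sums `ρ₁`, then `π` is the unique minimizer of `H(· | R₀₁)` over the
transportation polytope of nonnegative matrices with these marginals. -/
theorem discrete_static_schroedinger_bridge
    {n m : ℕ} (R₀₁ : Matrix (Fin n) (Fin m) ℝ)
    (hR : ∀ i j, 0 < R₀₁ i j)
    (ρ₀ : Fin n → ℝ) (ρ₁ : Fin m → ℝ)
    (hρ₀ : ∀ i, 0 < ρ₀ i) (hρ₁ : ∀ j, 0 < ρ₁ j)
    (hρ₀sum : ∑ i, ρ₀ i = 1) (hρ₁sum : ∑ j, ρ₁ j = 1)
    (f : Fin n → ℝ) (g : Fin m → ℝ)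
    (hf : ∀ i, 0 < f i) (hg : ∀ j, 0 < g j)
    (π : Matrix (Fin n) (Fin m) ℝ)
    (hπ : ∀ i j, π i j = f i * R₀₁ i j * g j)
    (hrow : ∀ i, ∑ j, π i j = ρ₀ i)
    (hcol : ∀ j, ∑ i, π i j = ρ₁ j) :
    (∀ π' : Matrix (Fin n) (Fin m) ℝ,
        (∀ i j, 0 ≤ π' i j) →
        (∀ i, ∑ j, π' i j = ρ₀ i) → (∀ j, ∑ i, π' i j = ρ₁ j) →
        discreteRelEnt π R₀₁ ≤ discreteRelEnt π' R₀₁) ∧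
    (∀ π' : Matrix (Fin n) (Fin m) ℝ,
        (∀ i j, 0 ≤ π' i j) →
        (∀ i, ∑ j, π' i j = ρ₀ i) → (∀ j, ∑ i, π' i j = ρ₁ j) →
        discreteRelEnt π' R₀₁ = discreteRelEnt π R₀₁ → π' = π) :=
  discrete_static_schroedinger_bridge_general R₀₁ hR ρ₀ ρ₁ f g hf hg π hπ hrow hcol
end
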